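/- arXiv:2011.09085 — 10 statements merged into one kernel-verified Lean document; each statement's English description precedes it below -/
import Mathlib

section
/- Let P be a Set-based tripos with generic predicate tr_Σ ∈ P Σ, let E := {(ξ,s) : ξ ∈ s} ⊆ Σ × 𝒫(Σ) with projections e₁ : E → Σ and e₂ : E → 𝒫(Σ), and let ⋁̇, ⋀̇ ∈ Σ^{𝒫(Σ)} be codes satisfying ⟦⋁̇⟧_{𝒫(Σ)} = ∃e₂(⟦e₁⟧_E) and ⟦⋀̇⟧_{𝒫(Σ)} = ∀e₂(⟦e₁⟧_E). Then for every σ ∈ Σ^X and every function f : X → Y: ⟦y ↦ ⋁̇{σ_x : x ∈ f⁻¹(y)}⟧_Y = ∃f(⟦σ⟧_X) and ⟦y ↦ ⋀̇{σ_x : x ∈ f⁻¹(y)}⟧_Y = ∀f(⟦σ⟧_X). -/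
universe u v

theorem quantifiers_on_codes
    (P : Type u → Type v) [∀ X, HeytingAlgebra (P X)]
    (map : ∀ {X Y : Type u}, (X → Y) → P Y → P X)
    (map_id : ∀ (X : Type u), map (id : X → X) = id)
    (map_comp : ∀ {X Y Z : Type u} (f : X → Y) (g : Y → Z), map (g ∘ f) = map f ∘ map g)
    (map_inf : ∀ {X Y : Type u} (f : X → Y) (p q : P Y), map f (p ⊓ q) = map f p ⊓ map f q)
    (map_sup : ∀ {X Y : Type u} (f : X → Y) (p q : P Y), map f (p ⊔ q) = map f p ⊔ map f q)
    (map_himp : ∀ {X Y : Type u} (f : X → Y) (p q : P Y), map f (p ⇨ q) = map f p ⇨ map f q)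
    (map_top : ∀ {X Y : Type u} (f : X → Y), map f (⊤ : P Y) = ⊤)
    (map_bot : ∀ {X Y : Type u} (f : X → Y), map f (⊥ : P Y) = ⊥)
    (fE fA : ∀ {X Y : Type u}, (X → Y) → P X → P Y)
    (fE_mono : ∀ {X Y : Type u} (f : X → Y), Monotone (fE f))
    (fA_mono : ∀ {X Y : Type u} (f : X → Y), Monotone (fA f))
    (adjE : ∀ {X Y : Type u} (f : X → Y) (p : P X) (q : P Y), fE f p ≤ q ↔ p ≤ map f q)
    (adjA : ∀ {X Y : Type u} (f : X → Y) (p : P X) (q : P Y), q ≤ fA f p ↔ map f q ≤ p)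
    (BC : ∀ {X X₁ X₂ Y : Type u} (f₁ : X → X₁) (f₂ : X → X₂) (g₁ : X₁ → Y) (g₂ : X₂ → Y),
      g₁ ∘ f₁ = g₂ ∘ f₂ →
      (∀ (x₁ : X₁) (x₂ : X₂), g₁ x₁ = g₂ x₂ → ∃! x : X, f₁ x = x₁ ∧ f₂ x = x₂) →
      fE f₁ ∘ map f₂ = map g₁ ∘ fE g₂ ∧ fA f₁ ∘ map f₂ = map g₁ ∘ fA g₂)
    (Sig : Type u) (tr : P Sig)
    (htr : ∀ X : Type u, Function.Surjective (fun σ : X → Sig => map σ tr))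
    (dSup dInf : Set Sig → Sig)
    (hdSup : map dSup tr = fE (fun z : {z : Sig × Set Sig // z.1 ∈ z.2} => z.1.2)
      (map (fun z : {z : Sig × Set Sig // z.1 ∈ z.2} => z.1.1) tr))
    (hdInf : map dInf tr = fA (fun z : {z : Sig × Set Sig // z.1 ∈ z.2} => z.1.2)
      (map (fun z : {z : Sig × Set Sig // z.1 ∈ z.2} => z.1.1) tr))
    {X Y : Type u} (σ : X → Sig) (f : X → Y) :
    map (fun y => dSup (σ '' (f ⁻¹' {y}))) tr = fE f (map σ tr) ∧
    map (fun y => dInf (σ '' (f ⁻¹' {y}))) tr = fA f (map σ tr) := by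
  classical
  -- monotonicity of map
  have map_mono : ∀ {A B : Type u} (h : A → B) (p q : P B), p ≤ q → map h p ≤ map h q := by
    intro A B h p q hpq
    have h1 : map h p = map h p ⊓ map h q := by
      rw [← map_inf, inf_eq_left.mpr hpq]
    exact le_trans (le_of_eq h1) inf_le_right
  have unitE : ∀ {A B : Type u} (h : A → B) (p : P A), p ≤ map h (fE h p) :=
    fun h p => (adjE h p (fE h p)).mp le_rfl
  have counitA : ∀ {A B : Type u} (h : A → B) (p : P A), map h (fA h p) ≤ p :=
    fun h p => (adjA h p (fA h p)).mp le_rfl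
  have fE_comp : ∀ {A B C : Type u} (u : A → B) (v : B → C) (p : P A),
      fE v (fE u p) = fE (v ∘ u) p := by
    intro A B C u v p
    apply le_antisymm
    · rw [adjE, adjE]
      have h := unitE (v ∘ u) p
      rw [map_comp] at h
      exact h
    · rw [adjE, map_comp]
      exact le_trans (unitE u p) (map_mono u _ _ (unitE v (fE u p)))
  have fA_comp : ∀ {A B C : Type u} (u : A → B) (v : B → C) (p : P A),
      fA v (fA u p) = fA (v ∘ u) p := by
    intro A B C u v p
    apply le_antisymm
    · rw [adjA, map_comp]
      exact le_trans (map_mono u _ _ (counitA v (fA u p))) (counitA u p)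
    · rw [adjA, adjA]
      have h := counitA (v ∘ u) p
      rw [map_comp] at h
      exact h
  -- the comparison set W and maps
  set E := {z : Sig × Set Sig // z.1 ∈ z.2} with hEdef
  set W := {w : Y × Sig // w.2 ∈ σ '' (f ⁻¹' {w.1})} with hWdef
  set f₁ : W → Y := fun w => w.1.1 with hf₁
  set f₂ : W → E := fun w => ⟨(w.1.2, σ '' (f ⁻¹' {w.1.1})), w.2⟩ with hf₂
  set p₂ : W → Sig := fun w => w.1.2 with hp₂
  have hq : ∀ x : X, σ x ∈ σ '' (f ⁻¹' {f x}) := fun x => ⟨x, rfl, rfl⟩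
  set q : X → W := fun x => ⟨(f x, σ x), hq x⟩ with hqdef
  have qsurj : Function.Surjective q := by
    rintro ⟨⟨y, ξ⟩, hm⟩
    obtain ⟨x, hx, hσ⟩ := hm
    have hx' : f x = y := hx
    refine ⟨x, Subtype.ext ?_⟩
    show (f x, σ x) = (y, ξ)
    rw [hx', hσ]
  obtain ⟨s, hs⟩ := qsurj.hasRightInverse
  have hqs : q ∘ s = id := funext hs
  have msq : ∀ p : P W, map s (map q p) = p := by
    intro p
    have h := congrFun (map_comp s q) p
    rw [hqs, map_id] at h
    exact h.symm
  have cancelE : ∀ p : P W, fE q (map q p) = p := by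
    intro p
    apply le_antisymm
    · exact (adjE q _ _).mpr le_rfl
    · have h := map_mono s _ _ (unitE q (map q p))
      rw [msq, msq] at h
      exact h
  have cancelA : ∀ p : P W, fA q (map q p) = p := by
    intro p
    apply le_antisymm
    · have h := map_mono s _ _ (counitA q (map q p))
      rw [msq, msq] at h
      exact h
    · exact (adjA q _ _).mpr le_rfl
  -- Beck–Chevalley for the pullback of g along e₂
  have hcomm : (fun y => σ '' (f ⁻¹' {y})) ∘ f₁ = (fun z : E => z.1.2) ∘ f₂ := rfl
  have hpb : ∀ (y : Y) (z : E), σ '' (f ⁻¹' {y}) = z.1.2 →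
      ∃! w : W, f₁ w = y ∧ f₂ w = z := by
    intro y z hz
    obtain ⟨⟨ξ, ss⟩, hmem⟩ := z
    have hz' : σ '' (f ⁻¹' {y}) = ss := hz
    subst hz'
    refine ⟨⟨(y, ξ), hmem⟩, ⟨rfl, rfl⟩, ?_⟩
    rintro ⟨⟨y', ξ'⟩, hm'⟩ ⟨h1, h2⟩
    have h3 : ξ' = ξ := congrArg (fun t : E => t.1.1) h2
    have h1' : y' = y := h1
    subst h1'; subst h3; rfl
  obtain ⟨hE, hA⟩ := BC f₁ f₂ (fun y => σ '' (f ⁻¹' {y})) (fun z : E => z.1.2) hcomm hpb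
  constructor
  · calc map (fun y => dSup (σ '' (f ⁻¹' {y}))) tr
        = map (fun y => σ '' (f ⁻¹' {y})) (map dSup tr) :=
          congrFun (map_comp (fun y => σ '' (f ⁻¹' {y})) dSup) tr
      _ = map (fun y => σ '' (f ⁻¹' {y}))
            (fE (fun z : E => z.1.2) (map (fun z : E => z.1.1) tr)) := by rw [hdSup]
      _ = fE f₁ (map f₂ (map (fun z : E => z.1.1) tr)) :=
          (congrFun hE (map (fun z : E => z.1.1) tr)).symm
      _ = fE f₁ (map p₂ tr) :=
          congrArg (fE f₁) (congrFun (map_comp f₂ (fun z : E => z.1.1)) tr).symm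
      _ = fE f₁ (fE q (map q (map p₂ tr))) := by rw [cancelE]
      _ = fE (f₁ ∘ q) (map q (map p₂ tr)) := by rw [fE_comp]
      _ = fE (f₁ ∘ q) (map (p₂ ∘ q) tr) :=
          congrArg (fE (f₁ ∘ q)) (congrFun (map_comp q p₂) tr).symm
      _ = fE f (map σ tr) := rfl
  · calc map (fun y => dInf (σ '' (f ⁻¹' {y}))) tr
        = map (fun y => σ '' (f ⁻¹' {y})) (map dInf tr) :=
          congrFun (map_comp (fun y => σ '' (f ⁻¹' {y})) dInf) tr
      _ = map (fun y => σ '' (f ⁻¹' {y}))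
            (fA (fun z : E => z.1.2) (map (fun z : E => z.1.1) tr)) := by rw [hdInf]
      _ = fA f₁ (map f₂ (map (fun z : E => z.1.1) tr)) :=
          (congrFun hA (map (fun z : E => z.1.1) tr)).symm
      _ = fA f₁ (map p₂ tr) :=
          congrArg (fA f₁) (congrFun (map_comp f₂ (fun z : E => z.1.1)) tr).symm
      _ = fA f₁ (fA q (map q (map p₂ tr))) := by rw [cancelA]
      _ = fA (f₁ ∘ q) (map q (map p₂ tr)) := by rw [fA_comp]
      _ = fA (f₁ ∘ q) (map (p₂ ∘ q) tr) :=
          congrArg (fA (f₁ ∘ q)) (congrFun (map_comp q p₂) tr).symm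
      _ = fA f (map σ tr) := rfl
end

section
/- Let P be a Set-based tripos with generic predicate tr_Σ ∈ P Σ, let →̇ ∈ Σ^(Σ×Σ) be a code with ⟦→̇⟧_{Σ×Σ} = ⟦π⟧_{Σ×Σ} ⇨ ⟦π'⟧_{Σ×Σ} (π, π' the projections Σ×Σ → Σ), let ⋀̇ ∈ Σ^{𝒫(Σ)} be a code with ⟦⋀̇⟧_{𝒫(Σ)} = ∀e₂(⟦e₁⟧_E) for the membership relation E := {(ξ,s) : ξ ∈ s} ⊆ Σ × 𝒫(Σ) with projections e₁, e₂, and let Φ := {ξ ∈ Σ : ⟦ξ⟧_1 = ⊤}, where ⟦ξ⟧_1 decodes the constant family at ξ over the singleton set 1. Then for every set X and all σ, τ ∈ Σ^X: ⟦σ⟧_X ≤ ⟦τ⟧_X if and only if ⋀̇{σ_x →̇ τ_x : x ∈ X} ∈ Φ. -/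
universe u v

theorem order_via_filter
    (P : Type u → Type v) [∀ X, HeytingAlgebra (P X)]
    (map : ∀ {X Y : Type u}, (X → Y) → P Y → P X)
    (map_id : ∀ (X : Type u), map (id : X → X) = id)
    (map_comp : ∀ {X Y Z : Type u} (f : X → Y) (g : Y → Z), map (g ∘ f) = map f ∘ map g)
    (map_inf : ∀ {X Y : Type u} (f : X → Y) (p q : P Y), map f (p ⊓ q) = map f p ⊓ map f q)
    (map_sup : ∀ {X Y : Type u} (f : X → Y) (p q : P Y), map f (p ⊔ q) = map f p ⊔ map f q)
    (map_himp : ∀ {X Y : Type u} (f : X → Y) (p q : P Y), map f (p ⇨ q) = map f p ⇨ map f q)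
    (map_top : ∀ {X Y : Type u} (f : X → Y), map f (⊤ : P Y) = ⊤)
    (map_bot : ∀ {X Y : Type u} (f : X → Y), map f (⊥ : P Y) = ⊥)
    (fE fA : ∀ {X Y : Type u}, (X → Y) → P X → P Y)
    (fE_mono : ∀ {X Y : Type u} (f : X → Y), Monotone (fE f))
    (fA_mono : ∀ {X Y : Type u} (f : X → Y), Monotone (fA f))
    (adjE : ∀ {X Y : Type u} (f : X → Y) (p : P X) (q : P Y), fE f p ≤ q ↔ p ≤ map f q)
    (adjA : ∀ {X Y : Type u} (f : X → Y) (p : P X) (q : P Y), q ≤ fA f p ↔ map f q ≤ p)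
    (BC : ∀ {X X₁ X₂ Y : Type u} (f₁ : X → X₁) (f₂ : X → X₂) (g₁ : X₁ → Y) (g₂ : X₂ → Y),
      g₁ ∘ f₁ = g₂ ∘ f₂ →
      (∀ (x₁ : X₁) (x₂ : X₂), g₁ x₁ = g₂ x₂ → ∃! x : X, f₁ x = x₁ ∧ f₂ x = x₂) →
      fE f₁ ∘ map f₂ = map g₁ ∘ fE g₂ ∧ fA f₁ ∘ map f₂ = map g₁ ∘ fA g₂)
    (Sig : Type u) (tr : P Sig)
    (htr : ∀ X : Type u, Function.Surjective (fun σ : X → Sig => map σ tr))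
    (dImp : Sig × Sig → Sig)
    (hdImp : map dImp tr
      = map (Prod.fst : Sig × Sig → Sig) tr ⇨ map (Prod.snd : Sig × Sig → Sig) tr)
    (dInf : Set Sig → Sig)
    (hdInf : map dInf tr = fA (fun z : {z : Sig × Set Sig // z.1 ∈ z.2} => z.1.2)
      (map (fun z : {z : Sig × Set Sig // z.1 ∈ z.2} => z.1.1) tr))
    {X : Type u} (σ τ : X → Sig) :
    map σ tr ≤ map τ tr ↔
      map (fun _ : PUnit.{u + 1} => dInf (Set.range fun x => dImp (σ x, τ x))) tr
        = (⊤ : P PUnit.{u + 1}) := by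
  classical
  -- map is monotone
  have mono : ∀ {A B : Type u} (f : A → B) (p q : P B), p ≤ q → map f p ≤ map f q := by
    intro A B f p q h
    have h1 : map f (p ⊓ q) = map f p ⊓ map f q := map_inf f p q
    rw [inf_eq_left.mpr h] at h1
    rw [h1]; exact inf_le_right
  have comp_eval : ∀ {A B C : Type u} (f : A → B) (h : B → C) (p : P C),
      map (h ∘ f) p = map f (map h p) := fun f h p => congrFun (map_comp f h) p
  set S : Set Sig := Set.range (fun x => dImp (σ x, τ x)) with hS
  -- the surjection onto the subtype and a section of it
  have hsurj : Function.Surjective (fun x : X => (⟨dImp (σ x, τ x), ⟨x, rfl⟩⟩ : S)) := by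
    rintro ⟨ξ, x, rfl⟩; exact ⟨x, rfl⟩
  let g : S → X := Function.surjInv hsurj
  have hrg : ∀ t : S, (⟨dImp (σ (g t), τ (g t)), ⟨g t, rfl⟩⟩ : S) = t :=
    fun t => Function.surjInv_eq hsurj t
  -- decode the subtype inclusion
  have hval1 : (fun t : S => (t : Sig)) = dImp ∘ (fun t : S => (σ (g t), τ (g t))) := by
    funext t
    exact (congrArg Subtype.val (hrg t)).symm
  have hval : map (fun t : S => (t : Sig)) tr = map g (map σ tr) ⇨ map g (map τ tr) := by
    rw [hval1, comp_eval, hdImp, map_himp, ← comp_eval, ← comp_eval]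
    have e1 : (Prod.fst ∘ fun t : S => (σ (g t), τ (g t))) = σ ∘ g := rfl
    have e2 : (Prod.snd ∘ fun t : S => (σ (g t), τ (g t))) = τ ∘ g := rfl
    rw [e1, e2, comp_eval, comp_eval]
  -- Beck-Chevalley for the pullback of e₂ along the constant map at S
  have comm : (fun _ : PUnit.{u+1} => S) ∘ (fun _ : S => PUnit.unit)
      = (fun z : {z : Sig × Set Sig // z.1 ∈ z.2} => z.1.2)
        ∘ (fun t : S => (⟨((t : Sig), S), t.2⟩ : {z : Sig × Set Sig // z.1 ∈ z.2})) := rfl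
  have pb : ∀ (u : PUnit.{u+1}) (z : {z : Sig × Set Sig // z.1 ∈ z.2}),
      (fun _ : PUnit.{u+1} => S) u = (fun z : {z : Sig × Set Sig // z.1 ∈ z.2} => z.1.2) z →
      ∃! t : S, (fun _ : S => PUnit.unit) t = u ∧
        (⟨((t : Sig), S), t.2⟩ : {z : Sig × Set Sig // z.1 ∈ z.2}) = z := by
    intro u z h
    have hSz : S = z.1.2 := h
    refine ⟨⟨z.1.1, by rw [hSz]; exact z.2⟩, ⟨Subsingleton.elim _ _, ?_⟩, ?_⟩
    · apply Subtype.ext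
      exact Prod.ext rfl hSz
    · rintro t ⟨-, h2⟩
      apply Subtype.ext
      exact congrArg (fun w : {z : Sig × Set Sig // z.1 ∈ z.2} => w.1.1) h2
  have hBC := (BC (fun _ : S => PUnit.unit)
      (fun t : S => (⟨((t : Sig), S), t.2⟩ : {z : Sig × Set Sig // z.1 ∈ z.2}))
      (fun _ : PUnit.{u+1} => S)
      (fun z : {z : Sig × Set Sig // z.1 ∈ z.2} => z.1.2) comm pb).2
  -- compute the right-hand side predicate
  have key : map (fun _ : PUnit.{u+1} => dInf S) tr
      = fA (fun _ : S => PUnit.unit) (map (fun t : S => (t : Sig)) tr) := by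
    have h1 : map (fun _ : PUnit.{u+1} => dInf S) tr
        = map (fun _ : PUnit.{u+1} => S) (map dInf tr) :=
      comp_eval (fun _ : PUnit.{u+1} => S) dInf tr
    rw [h1, hdInf]
    have h2 := congrFun hBC.symm
      (map (fun z : {z : Sig × Set Sig // z.1 ∈ z.2} => z.1.1) tr)
    simp only [Function.comp_apply] at h2
    rw [h2, ← comp_eval]
    rfl
  have key2 : map (fun _ : PUnit.{u+1} => dInf S) tr = (⊤ : P PUnit.{u+1})
      ↔ (⊤ : P ↥S) ≤ map (fun t : S => (t : Sig)) tr := by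
    rw [key]
    constructor
    · intro h
      have h' : (⊤ : P PUnit.{u+1}) ≤ fA (fun _ : S => PUnit.unit)
          (map (fun t : S => (t : Sig)) tr) := h.ge
      have := (adjA (fun _ : S => PUnit.unit) _ ⊤).mp h'
      rwa [map_top] at this
    · intro h
      refine top_unique ?_
      rw [adjA, map_top]
      exact h
  rw [key2]
  constructor
  · intro h
    rw [hval]
    exact le_himp_iff.mpr (by simpa using mono g _ _ h)
  · intro h
    have h2 := mono (fun x : X => (⟨dImp (σ x, τ x), ⟨x, rfl⟩⟩ : S)) _ _ h
    rw [map_top] at h2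
    have h3 : map ((fun t : S => (t : Sig)) ∘ fun x : X => (⟨dImp (σ x, τ x), ⟨x, rfl⟩⟩ : S)) tr
        = map σ tr ⇨ map τ tr := by
      have e : ((fun t : S => (t : Sig)) ∘ fun x : X => (⟨dImp (σ x, τ x), ⟨x, rfl⟩⟩ : S))
          = dImp ∘ (fun x : X => (σ x, τ x)) := rfl
      rw [e, comp_eval, hdImp, map_himp, ← comp_eval, ← comp_eval]
      rfl
    rw [← comp_eval, h3] at h2
    simpa using le_himp_iff.mp h2
end

section
/- Let P be a Set-based tripos with generic predicate tr_Σ ∈ P Σ, and let ⋁̇, ⋀̇ ∈ Σ^{𝒫(Σ)} be codes with ⟦⋁̇⟧_{𝒫(Σ)} = ∃e₂(⟦e₁⟧_E) and ⟦⋀̇⟧_{𝒫(Σ)} = ∀e₂(⟦e₁⟧_E), where E := {(ξ,s) : ξ ∈ s} ⊆ Σ × 𝒫(Σ) has projections e₁ : E → Σ and e₂ : E → 𝒫(Σ). Then, as predicates in P(𝒫(𝒫(Σ))): ⟦S ↦ ⋁̇{⋁̇ s : s ∈ S}⟧ = ⟦S ↦ ⋁̇(⋃ S)⟧ and ⟦S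 ↦ ⋀̇{⋀̇ s : s ∈ S}⟧ = ⟦S ↦ ⋀̇(⋃ S)⟧. -/
universe u v

theorem merging_aux
    (P : Type u → Type v)
    (map : ∀ {X Y : Type u}, (X → Y) → P Y → P X)
    (map_comp : ∀ {X Y Z : Type u} (f : X → Y) (g : Y → Z), map (g ∘ f) = map f ∘ map g)
    (Sig : Type u) (tr : P Sig) (d : Set Sig → Sig)
    (Q : ∀ {X Y : Type u}, (X → Y) → P X → P Y)
    (Qcomp : ∀ {X Y Z : Type u} (f : X → Y) (g : Y → Z) (p : P X), Q g (Q f p) = Q (g ∘ f) p)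
    (Qsurj : ∀ {X Y : Type u} (k : X → Y), Function.Surjective k → ∀ p : P Y, Q k (map k p) = p)
    (L : ∀ {X : Type u} (f : X → Set Sig), map (fun x => d (f x)) tr
      = Q (fun e : {e : X × Sig // e.2 ∈ f e.1} => e.1.1)
          (map (fun e : {e : X × Sig // e.2 ∈ f e.1} => e.1.2) tr)) :
    map (fun S : Set (Set Sig) => d (d '' S)) tr
      = map (fun S : Set (Set Sig) => d (⋃₀ S)) tr := by
  classical
  -- abbreviations
  let DF := {e : Set (Set Sig) × Sig // e.2 ∈ (fun S => d '' S) e.1}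
  let Z := {z : Set (Set Sig) × Set Sig // z.2 ∈ z.1}
  let W := {e : Z × Sig // e.2 ∈ (fun z : Z => z.1.2) e.1}
  let DG := {e : Set (Set Sig) × Sig // e.2 ∈ (fun S : Set (Set Sig) => (⋃₀ S : Set Sig)) e.1}
  let kF : DF → Set (Set Sig) := fun e => e.1.1
  let sF : DF → Sig := fun e => e.1.2
  let kG : DG → Set (Set Sig) := fun e => e.1.1
  let sG : DG → Sig := fun e => e.1.2
  let kW : W → Z := fun e => e.1.1
  let sW : W → Sig := fun e => e.1.2
  let k : Z → DF := fun z => ⟨(z.1.1, d z.1.2), ⟨z.1.2, z.2, rfl⟩⟩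
  let m : W → DG := fun w => ⟨(w.1.1.1.1, w.1.2), ⟨w.1.1.1.2, w.1.1.2, w.2⟩⟩
  have hk : Function.Surjective k := by
    rintro ⟨⟨S, ξ⟩, s, hs, hds⟩
    exact ⟨⟨(S, s), hs⟩, Subtype.ext (Prod.ext rfl hds)⟩
  have hm : Function.Surjective m := by
    rintro ⟨⟨S, ξ⟩, s, hsS, hξs⟩
    exact ⟨⟨(⟨(S, s), hsS⟩, ξ), hξs⟩, rfl⟩
  have hinner : map k (map sF tr) = Q kW (map sW tr) := by
    have h1 : map (sF ∘ k) tr = map k (map sF tr) := congrFun (map_comp k sF) tr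
    rw [← h1]
    exact L (fun z : Z => z.1.2)
  have h2 : map sF tr = Q k (Q kW (map sW tr)) :=
    (Qsurj k hk (map sF tr)).symm.trans (congrArg (Q k) hinner)
  have hinner' : map m (map sG tr) = map sW tr := by
    have h1 : map (sG ∘ m) tr = map m (map sG tr) := congrFun (map_comp m sG) tr
    rw [← h1]
    rfl
  have h3 : map sG tr = Q m (map sW tr) :=
    (Qsurj m hm (map sG tr)).symm.trans (congrArg (Q m) hinner')
  calc map (fun S : Set (Set Sig) => d (d '' S)) tr
      = Q kF (map sF tr) := L (fun S => d '' S)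
    _ = Q kF (Q k (Q kW (map sW tr))) := by rw [h2]
    _ = Q kF (Q (k ∘ kW) (map sW tr)) := by rw [Qcomp kW k]
    _ = Q (kF ∘ (k ∘ kW)) (map sW tr) := by rw [Qcomp (k ∘ kW) kF]
    _ = Q (kG ∘ m) (map sW tr) := rfl
    _ = Q kG (Q m (map sW tr)) := (Qcomp m kG _).symm
    _ = Q kG (map sG tr) := by rw [h3]
    _ = map (fun S : Set (Set Sig) => d (⋃₀ S)) tr := (L (fun S : Set (Set Sig) => (⋃₀ S : Set Sig))).symm

theorem merging_quantifications
    (P : Type u → Type v) [∀ X, HeytingAlgebra (P X)]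
    (map : ∀ {X Y : Type u}, (X → Y) → P Y → P X)
    (map_id : ∀ (X : Type u), map (id : X → X) = id)
    (map_comp : ∀ {X Y Z : Type u} (f : X → Y) (g : Y → Z), map (g ∘ f) = map f ∘ map g)
    (map_inf : ∀ {X Y : Type u} (f : X → Y) (p q : P Y), map f (p ⊓ q) = map f p ⊓ map f q)
    (map_sup : ∀ {X Y : Type u} (f : X → Y) (p q : P Y), map f (p ⊔ q) = map f p ⊔ map f q)
    (map_himp : ∀ {X Y : Type u} (f : X → Y) (p q : P Y), map f (p ⇨ q) = map f p ⇨ map f q)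
    (map_top : ∀ {X Y : Type u} (f : X → Y), map f (⊤ : P Y) = ⊤)
    (map_bot : ∀ {X Y : Type u} (f : X → Y), map f (⊥ : P Y) = ⊥)
    (fE fA : ∀ {X Y : Type u}, (X → Y) → P X → P Y)
    (fE_mono : ∀ {X Y : Type u} (f : X → Y), Monotone (fE f))
    (fA_mono : ∀ {X Y : Type u} (f : X → Y), Monotone (fA f))
    (adjE : ∀ {X Y : Type u} (f : X → Y) (p : P X) (q : P Y), fE f p ≤ q ↔ p ≤ map f q)
    (adjA : ∀ {X Y : Type u} (f : X → Y) (p : P X) (q : P Y), q ≤ fA f p ↔ map f q ≤ p)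
    (BC : ∀ {X X₁ X₂ Y : Type u} (f₁ : X → X₁) (f₂ : X → X₂) (g₁ : X₁ → Y) (g₂ : X₂ → Y),
      g₁ ∘ f₁ = g₂ ∘ f₂ →
      (∀ (x₁ : X₁) (x₂ : X₂), g₁ x₁ = g₂ x₂ → ∃! x : X, f₁ x = x₁ ∧ f₂ x = x₂) →
      fE f₁ ∘ map f₂ = map g₁ ∘ fE g₂ ∧ fA f₁ ∘ map f₂ = map g₁ ∘ fA g₂)
    (Sig : Type u) (tr : P Sig)
    (htr : ∀ X : Type u, Function.Surjective (fun σ : X → Sig => map σ tr))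
    (dSup dInf : Set Sig → Sig)
    (hdSup : map dSup tr = fE (fun z : {z : Sig × Set Sig // z.1 ∈ z.2} => z.1.2)
      (map (fun z : {z : Sig × Set Sig // z.1 ∈ z.2} => z.1.1) tr))
    (hdInf : map dInf tr = fA (fun z : {z : Sig × Set Sig // z.1 ∈ z.2} => z.1.2)
      (map (fun z : {z : Sig × Set Sig // z.1 ∈ z.2} => z.1.1) tr))
    :
    map (fun S : Set (Set Sig) => dSup (dSup '' S)) tr
      = map (fun S : Set (Set Sig) => dSup (⋃₀ S)) tr ∧
    map (fun S : Set (Set Sig) => dInf (dInf '' S)) tr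
      = map (fun S : Set (Set Sig) => dInf (⋃₀ S)) tr := by
  classical
  -- map is monotone
  have map_mono : ∀ {X Y : Type u} (f : X → Y), Monotone (map f) := by
    intro X Y f p q hpq
    have h : p ⊓ q = p := inf_eq_left.mpr hpq
    calc map f p = map f (p ⊓ q) := by rw [h]
      _ = map f p ⊓ map f q := map_inf f p q
      _ ≤ map f q := inf_le_right
  -- pulling back along a split surjection and then pushing with map of a section
  have map_sec : ∀ {X Y : Type u} (k : X → Y) (s : Y → X), (∀ y, k (s y) = y) →
      ∀ q : P Y, map s (map k q) = q := by
    intro X Y k s hs q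
    have h1 : map (k ∘ s) q = map s (map k q) := congrFun (map_comp s k) q
    have h2 : k ∘ s = id := funext hs
    rw [← h1, h2, map_id]
    rfl
  -- composition of left adjoints
  have fE_comp : ∀ {X Y Z : Type u} (f : X → Y) (g : Y → Z) (p : P X),
      fE g (fE f p) = fE (g ∘ f) p := by
    intro X Y Z f g p
    apply le_antisymm
    · rw [adjE, adjE]
      have h1 : p ≤ map (g ∘ f) (fE (g ∘ f) p) := (adjE (g ∘ f) p _).mp le_rfl
      rw [map_comp] at h1
      exact h1
    · rw [adjE, map_comp]
      have h1 : fE f p ≤ map g (fE g (fE f p)) := (adjE g (fE f p) _).mp le_rfl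
      have h2 : p ≤ map f (fE f p) := (adjE f p _).mp le_rfl
      exact h2.trans (map_mono f h1)
  -- composition of right adjoints
  have fA_comp : ∀ {X Y Z : Type u} (f : X → Y) (g : Y → Z) (p : P X),
      fA g (fA f p) = fA (g ∘ f) p := by
    intro X Y Z f g p
    apply le_antisymm
    · rw [adjA, map_comp]
      have h1 : map g (fA g (fA f p)) ≤ fA f p := (adjA g (fA f p) _).mp le_rfl
      have h2 : map f (fA f p) ≤ p := (adjA f p _).mp le_rfl
      exact (map_mono f h1).trans h2
    · rw [adjA, adjA]
      have h1 : map (g ∘ f) (fA (g ∘ f) p) ≤ p := (adjA (g ∘ f) p _).mp le_rfl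
      rw [map_comp] at h1
      exact h1
  -- for surjective k, fE k ∘ map k = id
  have fE_surj : ∀ {X Y : Type u} (k : X → Y), Function.Surjective k →
      ∀ p : P Y, fE k (map k p) = p := by
    intro X Y k hk p
    obtain ⟨s, hs⟩ := hk.hasRightInverse
    apply le_antisymm
    · exact (adjE k (map k p) p).mpr le_rfl
    · have h1 : map k p ≤ map k (fE k (map k p)) := (adjE k (map k p) _).mp le_rfl
      have h2 := map_mono s h1
      rwa [map_sec k s hs, map_sec k s hs] at h2
  -- for surjective k, fA k ∘ map k = id
  have fA_surj : ∀ {X Y : Type u} (k : X → Y), Function.Surjective k →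
      ∀ p : P Y, fA k (map k p) = p := by
    intro X Y k hk p
    obtain ⟨s, hs⟩ := hk.hasRightInverse
    apply le_antisymm
    · have h1 : map k (fA k (map k p)) ≤ map k p := (adjA k (map k p) _).mp le_rfl
      have h2 := map_mono s h1
      rwa [map_sec k s hs, map_sec k s hs] at h2
    · exact (adjA k (map k p) p).mpr le_rfl
  -- the decoding of the codes dSup ∘ f and dInf ∘ f, via Beck-Chevalley
  have L_both : ∀ {X : Type u} (f : X → Set Sig),
      (map (fun x => dSup (f x)) tr
        = fE (fun e : {e : X × Sig // e.2 ∈ f e.1} => e.1.1)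
            (map (fun e : {e : X × Sig // e.2 ∈ f e.1} => e.1.2) tr)) ∧
      (map (fun x => dInf (f x)) tr
        = fA (fun e : {e : X × Sig // e.2 ∈ f e.1} => e.1.1)
            (map (fun e : {e : X × Sig // e.2 ∈ f e.1} => e.1.2) tr)) := by
    intro X f
    have hpb : ∀ (x₁ : X) (x₂ : {z : Sig × Set Sig // z.1 ∈ z.2}),
        f x₁ = x₂.1.2 →
        ∃! e : {e : X × Sig // e.2 ∈ f e.1},
          (fun e : {e : X × Sig // e.2 ∈ f e.1} => e.1.1) e = x₁ ∧
          (fun e : {e : X × Sig // e.2 ∈ f e.1} =>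
            (⟨(e.1.2, f e.1.1), e.2⟩ : {z : Sig × Set Sig // z.1 ∈ z.2})) e = x₂ := by
      rintro x₁ ⟨⟨ξ, s⟩, hmem⟩ h
      dsimp at h
      refine ⟨⟨(x₁, ξ), by rw [h]; exact hmem⟩, ⟨rfl, Subtype.ext (Prod.ext rfl h)⟩, ?_⟩
      rintro ⟨⟨a, ζ⟩, hz⟩ ⟨h1, h2⟩
      dsimp at h1 h2 ⊢
      have h3 : ζ = ξ := congrArg (fun t => t.1.1) h2
      exact Subtype.ext (Prod.ext h1 h3)
    have hBC := BC (fun e : {e : X × Sig // e.2 ∈ f e.1} => e.1.1)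
      (fun e : {e : X × Sig // e.2 ∈ f e.1} =>
        (⟨(e.1.2, f e.1.1), e.2⟩ : {z : Sig × Set Sig // z.1 ∈ z.2}))
      f (fun z : {z : Sig × Set Sig // z.1 ∈ z.2} => z.1.2) rfl hpb
    constructor
    · calc map (fun x => dSup (f x)) tr
          = map f (map dSup tr) := congrFun (map_comp f dSup) tr
        _ = map f (fE (fun z : {z : Sig × Set Sig // z.1 ∈ z.2} => z.1.2)
              (map (fun z : {z : Sig × Set Sig // z.1 ∈ z.2} => z.1.1) tr)) := by rw [hdSup]
        _ = fE (fun e : {e : X × Sig // e.2 ∈ f e.1} => e.1.1)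
              (map (fun e : {e : X × Sig // e.2 ∈ f e.1} =>
                (⟨(e.1.2, f e.1.1), e.2⟩ : {z : Sig × Set Sig // z.1 ∈ z.2}))
                (map (fun z : {z : Sig × Set Sig // z.1 ∈ z.2} => z.1.1) tr)) :=
          (congrFun hBC.1 _).symm
        _ = fE (fun e : {e : X × Sig // e.2 ∈ f e.1} => e.1.1)
              (map (fun e : {e : X × Sig // e.2 ∈ f e.1} => e.1.2) tr) :=
          congrArg (fE (fun e : {e : X × Sig // e.2 ∈ f e.1} => e.1.1))
            (congrFun (map_comp
              (fun e : {e : X × Sig // e.2 ∈ f e.1} =>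
                (⟨(e.1.2, f e.1.1), e.2⟩ : {z : Sig × Set Sig // z.1 ∈ z.2}))
              (fun z : {z : Sig × Set Sig // z.1 ∈ z.2} => z.1.1)) tr).symm
    · calc map (fun x => dInf (f x)) tr
          = map f (map dInf tr) := congrFun (map_comp f dInf) tr
        _ = map f (fA (fun z : {z : Sig × Set Sig // z.1 ∈ z.2} => z.1.2)
              (map (fun z : {z : Sig × Set Sig // z.1 ∈ z.2} => z.1.1) tr)) := by rw [hdInf]
        _ = fA (fun e : {e : X × Sig // e.2 ∈ f e.1} => e.1.1)
              (map (fun e : {e : X × Sig // e.2 ∈ f e.1} =>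
                (⟨(e.1.2, f e.1.1), e.2⟩ : {z : Sig × Set Sig // z.1 ∈ z.2}))
                (map (fun z : {z : Sig × Set Sig // z.1 ∈ z.2} => z.1.1) tr)) :=
          (congrFun hBC.2 _).symm
        _ = fA (fun e : {e : X × Sig // e.2 ∈ f e.1} => e.1.1)
              (map (fun e : {e : X × Sig // e.2 ∈ f e.1} => e.1.2) tr) :=
          congrArg (fA (fun e : {e : X × Sig // e.2 ∈ f e.1} => e.1.1))
            (congrFun (map_comp
              (fun e : {e : X × Sig // e.2 ∈ f e.1} =>
                (⟨(e.1.2, f e.1.1), e.2⟩ : {z : Sig × Set Sig // z.1 ∈ z.2}))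
              (fun z : {z : Sig × Set Sig // z.1 ∈ z.2} => z.1.1)) tr).symm
  exact ⟨merging_aux P (@map) @map_comp Sig tr dSup (@fE) @fE_comp @fE_surj
      (fun {X} f => (L_both f).1),
    merging_aux P (@map) @map_comp Sig tr dInf (@fA) @fA_comp @fA_surj
      (fun {X} f => (L_both f).2)⟩
end

section
/- Let P be a Set-based tripos with generic predicate tr_Σ ∈ P Σ, let →̇ ∈ Σ^(Σ×Σ) be a code with ⟦→̇⟧_{Σ×Σ} = ⟦π⟧_{Σ×Σ} ⇨ ⟦π'⟧_{Σ×Σ} (π, π' the projections Σ×Σ → Σ), and let ⋀̇ ∈ Σ^{𝒫(Σ)} be a code with ⟦⋀̇⟧_{𝒫(Σ)} = ∀e₂(⟦e₁⟧_E) for the membership relation E := {(ξ,s) : ξ ∈ s} ⊆ Σ × 𝒫(Σ) with projections e₁, e₂. Then, as predicates in P(Σ × 𝒫(Σ)): ⟦(θ,s) ↦ ⋀̇{θ →̇ ξ : ξ ∈ s}⟧ = ⟦(θ,s) ↦ θ →̇ (⋀̇ s)⟧. -/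
universe u v

theorem distr_forall_imp
    (P : Type u → Type v) [∀ X, HeytingAlgebra (P X)]
    (map : ∀ {X Y : Type u}, (X → Y) → P Y → P X)
    (map_id : ∀ (X : Type u), map (id : X → X) = id)
    (map_comp : ∀ {X Y Z : Type u} (f : X → Y) (g : Y → Z), map (g ∘ f) = map f ∘ map g)
    (map_inf : ∀ {X Y : Type u} (f : X → Y) (p q : P Y), map f (p ⊓ q) = map f p ⊓ map f q)
    (map_sup : ∀ {X Y : Type u} (f : X → Y) (p q : P Y), map f (p ⊔ q) = map f p ⊔ map f q)
    (map_himp : ∀ {X Y : Type u} (f : X → Y) (p q : P Y), map f (p ⇨ q) = map f p ⇨ map f q)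
    (map_top : ∀ {X Y : Type u} (f : X → Y), map f (⊤ : P Y) = ⊤)
    (map_bot : ∀ {X Y : Type u} (f : X → Y), map f (⊥ : P Y) = ⊥)
    (fE fA : ∀ {X Y : Type u}, (X → Y) → P X → P Y)
    (fE_mono : ∀ {X Y : Type u} (f : X → Y), Monotone (fE f))
    (fA_mono : ∀ {X Y : Type u} (f : X → Y), Monotone (fA f))
    (adjE : ∀ {X Y : Type u} (f : X → Y) (p : P X) (q : P Y), fE f p ≤ q ↔ p ≤ map f q)
    (adjA : ∀ {X Y : Type u} (f : X → Y) (p : P X) (q : P Y), q ≤ fA f p ↔ map f q ≤ p)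
    (BC : ∀ {X X₁ X₂ Y : Type u} (f₁ : X → X₁) (f₂ : X → X₂) (g₁ : X₁ → Y) (g₂ : X₂ → Y),
      g₁ ∘ f₁ = g₂ ∘ f₂ →
      (∀ (x₁ : X₁) (x₂ : X₂), g₁ x₁ = g₂ x₂ → ∃! x : X, f₁ x = x₁ ∧ f₂ x = x₂) →
      fE f₁ ∘ map f₂ = map g₁ ∘ fE g₂ ∧ fA f₁ ∘ map f₂ = map g₁ ∘ fA g₂)
    (Sig : Type u) (tr : P Sig)
    (htr : ∀ X : Type u, Function.Surjective (fun σ : X → Sig => map σ tr))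
    (dImp : Sig × Sig → Sig)
    (hdImp : map dImp tr
      = map (Prod.fst : Sig × Sig → Sig) tr ⇨ map (Prod.snd : Sig × Sig → Sig) tr)
    (dInf : Set Sig → Sig)
    (hdInf : map dInf tr = fA (fun z : {z : Sig × Set Sig // z.1 ∈ z.2} => z.1.2)
      (map (fun z : {z : Sig × Set Sig // z.1 ∈ z.2} => z.1.1) tr))
    :
    map (fun z : Sig × Set Sig => dInf ((fun ξ => dImp (z.1, ξ)) '' z.2)) tr
      = map (fun z : Sig × Set Sig => dImp (z.1, dInf z.2)) tr := by
  classical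
  -- Abbreviations
  have mc : ∀ {X Y Z : Type u} (f : X → Y) (g : Y → Z) (p : P Z),
      map (fun x => g (f x)) p = map f (map g p) := fun f g p => congrFun (map_comp f g) p
  have map_mono : ∀ {X Y : Type u} (f : X → Y), Monotone (map f) := by
    intro X Y f p q hpq
    have h1 : p ⊓ q = p := inf_eq_left.mpr hpq
    calc map f p = map f (p ⊓ q) := by rw [h1]
      _ = map f p ⊓ map f q := map_inf f p q
      _ ≤ map f q := inf_le_right
  have map_refl : ∀ {X Y : Type u} (h : X → Y) (hs : Function.Surjective h)
      (p q : P Y), map h p ≤ map h q → p ≤ q := by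
    intro X Y h hs p q hle
    have hsec : h ∘ Function.surjInv hs = id := funext (Function.rightInverse_surjInv hs)
    have e : ∀ r : P Y, map (Function.surjInv hs) (map h r) = r := by
      intro r
      rw [← mc (Function.surjInv hs) h r]
      have h4 : (fun x => h (Function.surjInv hs x)) = (id : Y → Y) :=
        funext (Function.rightInverse_surjInv hs)
      rw [h4, map_id]
      rfl
    have h3 := map_mono (Function.surjInv hs) hle
    rwa [e, e] at h3
  -- counit
  have counit : ∀ {X Y : Type u} (f : X → Y) (u : P X), map f (fA f u) ≤ u :=
    fun f u => (adjA f u (fA f u)).mp le_rfl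
  -- fA is invariant under surjective reindexing
  have fA_surj : ∀ {A B W : Type u} (f : A → W) (h : B → A) (hs : Function.Surjective h)
      (u : P A), fA (fun b => f (h b)) (map h u) = fA f u := by
    intro A B W f h hs u
    apply le_antisymm
    · rw [adjA]
      apply map_refl h hs
      have h1 : map h (map f (fA (fun b => f (h b)) (map h u)))
          = map (fun b => f (h b)) (fA (fun b => f (h b)) (map h u)) := (mc h f _).symm
      rw [h1]
      exact counit _ _
    · rw [adjA]
      have h1 : map (fun b => f (h b)) (fA f u) = map h (map f (fA f u)) := mc h f _
      rw [h1]
      exact map_mono h (counit f u)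
  -- Frobenius for fA
  have fA_himp : ∀ {X Y : Type u} (f : X → Y) (u : P Y) (v : P X),
      fA f (map f u ⇨ v) = u ⇨ fA f v := by
    intro X Y f u v
    apply le_antisymm
    · rw [le_himp_iff, adjA, map_inf]
      calc map f (fA f (map f u ⇨ v)) ⊓ map f u
          ≤ (map f u ⇨ v) ⊓ map f u := inf_le_inf_right _ (counit f _)
        _ ≤ v := himp_inf_le
    · rw [adjA, map_himp]
      exact himp_le_himp le_rfl (counit f v)
  -- Set-up
  set W := Sig × Set Sig with hW
  let E' := {z : Sig × Set Sig // z.1 ∈ z.2}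
  let e₁ : E' → Sig := fun z => z.1.1
  let e₂ : E' → Set Sig := fun z => z.1.2
  let g : W → Set Sig := fun w => (fun ξ => dImp (w.1, ξ)) '' w.2
  let F := {x : W × E' // g x.1 = e₂ x.2}
  let F' := {p : W × Sig // p.2 ∈ p.1.2}
  let q : F' → W := fun p => p.1.1
  let h : F' → F := fun p => ⟨(p.1.1, ⟨(dImp (p.1.1.1, p.1.2), g p.1.1), ⟨p.1.2, p.2, rfl⟩⟩), rfl⟩
  -- surjectivity of h
  have hsurj : Function.Surjective h := by
    rintro ⟨⟨w, z⟩, hz⟩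
    have hz' : z.1.1 ∈ g w := by rw [hz]; exact z.2
    obtain ⟨ξ, hξ, hξ'⟩ := hz'
    refine ⟨⟨(w, ξ), hξ⟩, ?_⟩
    apply Subtype.ext
    refine Prod.ext rfl ?_
    apply Subtype.ext
    exact Prod.ext hξ' hz
  -- the two Beck-Chevalley squares
  have BC1 := (BC (fun x : F => x.1.1) (fun x : F => x.1.2) g e₂
    (funext fun x => x.2)
    (by
      intro w z hwz
      exact ⟨⟨(w, z), hwz⟩, ⟨rfl, rfl⟩, by
        rintro ⟨⟨w', z'⟩, h'⟩ ⟨h1, h2⟩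
        apply Subtype.ext
        exact Prod.ext h1 h2⟩)).2
  have BC2 := (BC q (fun p : F' => (⟨(p.1.2, p.1.1.2), p.2⟩ : E')) (Prod.snd : W → Set Sig) e₂
    (funext fun p => rfl)
    (by
      intro w z hwz
      refine ⟨⟨(w, z.1.1), by rw [hwz]; exact z.2⟩, ⟨rfl, ?_⟩, ?_⟩
      · apply Subtype.ext
        exact Prod.ext rfl hwz
      · rintro ⟨⟨w', ξ'⟩, h'⟩ ⟨h1, h2⟩
        apply Subtype.ext
        refine Prod.ext h1 ?_
        have := congrArg (fun z : E' => z.1.1) h2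
        exact this)).2
  -- abbreviations for predicates
  let A : P W := map (Prod.fst : W → Sig) tr
  let B : P F' := map (fun p : F' => p.1.2) tr
  -- LHS computation
  have lhs_eq : map (fun z : W => dInf ((fun ξ => dImp (z.1, ξ)) '' z.2)) tr
      = A ⇨ fA q B := by
    calc map (fun z : W => dInf ((fun ξ => dImp (z.1, ξ)) '' z.2)) tr
        = map g (map dInf tr) := mc g dInf tr
      _ = map g (fA e₂ (map e₁ tr)) := by rw [hdInf]
      _ = fA (fun x : F => x.1.1) (map (fun x : F => x.1.2) (map e₁ tr)) :=
          (congrFun BC1 (map e₁ tr)).symm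
      _ = fA (fun x : F => x.1.1) (map (fun x : F => x.1.2.1.1) tr) := by
          rw [mc (fun x : F => x.1.2) e₁ tr]
      _ = fA (fun b : F' => (h b).1.1) (map h (map (fun x : F => x.1.2.1.1) tr)) :=
          (fA_surj (fun x : F => x.1.1) h hsurj _).symm
      _ = fA q (map (fun p : F' => dImp (p.1.1.1, p.1.2)) tr) := by
          rw [← mc h (fun x : F => x.1.2.1.1) tr]
      _ = fA q (map (fun p : F' => (p.1.1.1, p.1.2)) (map dImp tr)) := by
          rw [← mc (fun p : F' => (p.1.1.1, p.1.2)) dImp tr]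
      _ = fA q (map (fun p : F' => (p.1.1.1, p.1.2)) (map (Prod.fst : Sig × Sig → Sig) tr)
            ⇨ map (fun p : F' => (p.1.1.1, p.1.2)) (map (Prod.snd : Sig × Sig → Sig) tr)) := by
          rw [hdImp, map_himp]
      _ = fA q (map (fun p : F' => p.1.1.1) tr ⇨ B) := by
          rw [← mc (fun p : F' => (p.1.1.1, p.1.2)) (Prod.fst : Sig × Sig → Sig) tr,
              ← mc (fun p : F' => (p.1.1.1, p.1.2)) (Prod.snd : Sig × Sig → Sig) tr]
      _ = fA q (map q A ⇨ B) := by rw [← mc q (Prod.fst : W → Sig) tr]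
      _ = A ⇨ fA q B := fA_himp q A B
  -- RHS computation
  have rhs_eq : map (fun z : W => dImp (z.1, dInf z.2)) tr = A ⇨ fA q B := by
    calc map (fun z : W => dImp (z.1, dInf z.2)) tr
        = map (fun z : W => (z.1, dInf z.2)) (map dImp tr) :=
          mc (fun z : W => (z.1, dInf z.2)) dImp tr
      _ = map (fun z : W => (z.1, dInf z.2)) (map (Prod.fst : Sig × Sig → Sig) tr)
            ⇨ map (fun z : W => (z.1, dInf z.2)) (map (Prod.snd : Sig × Sig → Sig) tr) := by
          rw [hdImp, map_himp]
      _ = A ⇨ map (fun z : W => dInf z.2) tr := by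
          rw [← mc (fun z : W => (z.1, dInf z.2)) (Prod.fst : Sig × Sig → Sig) tr,
              ← mc (fun z : W => (z.1, dInf z.2)) (Prod.snd : Sig × Sig → Sig) tr]
      _ = A ⇨ map (Prod.snd : W → Set Sig) (map dInf tr) := by
          rw [← mc (Prod.snd : W → Set Sig) dInf tr]
      _ = A ⇨ map (Prod.snd : W → Set Sig) (fA e₂ (map e₁ tr)) := by rw [hdInf]
      _ = A ⇨ fA q (map (fun p : F' => (⟨(p.1.2, p.1.1.2), p.2⟩ : E')) (map e₁ tr)) := by
          have h5 : map (Prod.snd : W → Set Sig) (fA e₂ (map e₁ tr))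
              = fA q (map (fun p : F' => (⟨(p.1.2, p.1.1.2), p.2⟩ : E')) (map e₁ tr)) :=
            (congrFun BC2 (map e₁ tr)).symm
          rw [h5]
      _ = A ⇨ fA q B := by
          rw [← mc (fun p : F' => (⟨(p.1.2, p.1.1.2), p.2⟩ : E')) e₁ tr]
  rw [lhs_eq, rhs_eq]
end

section
/- Let P be a Set-based tripos with generic predicate tr_Σ ∈ P Σ, let ⋁̇, ⋀̇ ∈ Σ^{𝒫(Σ)} be codes with ⟦⋁̇⟧_{𝒫(Σ)} = ∃e₂(⟦e₁⟧_E) and ⟦⋀̇⟧_{𝒫(Σ)} = ∀e₂(⟦e₁⟧_E) for the membership relation E := {(ξ,s) : ξ ∈ s} ⊆ Σ × 𝒫(Σ) with projections e₁, e₂, and let F := {(s,s') : s ⊆ s'} ⊆ 𝒫(Σ) × 𝒫(Σ) with projections f₁, f₂ : F → 𝒫(Σ). Then in P F: ⟦⋁̇ ∘ f₁⟧_F ≤ ⟦⋁̇ ∘ f₂⟧_F and ⟦⋀̇ ∘ f₁⟧_F ≥ ⟦⋀̇ ∘ f₂⟧_F. -/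
universe u v

theorem quantifiers_monotone_antitone
    (P : Type u → Type v) [∀ X, HeytingAlgebra (P X)]
    (map : ∀ {X Y : Type u}, (X → Y) → P Y → P X)
    (map_id : ∀ (X : Type u), map (id : X → X) = id)
    (map_comp : ∀ {X Y Z : Type u} (f : X → Y) (g : Y → Z), map (g ∘ f) = map f ∘ map g)
    (map_inf : ∀ {X Y : Type u} (f : X → Y) (p q : P Y), map f (p ⊓ q) = map f p ⊓ map f q)
    (map_sup : ∀ {X Y : Type u} (f : X → Y) (p q : P Y), map f (p ⊔ q) = map f p ⊔ map f q)
    (map_himp : ∀ {X Y : Type u} (f : X → Y) (p q : P Y), map f (p ⇨ q) = map f p ⇨ map f q)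
    (map_top : ∀ {X Y : Type u} (f : X → Y), map f (⊤ : P Y) = ⊤)
    (map_bot : ∀ {X Y : Type u} (f : X → Y), map f (⊥ : P Y) = ⊥)
    (fE fA : ∀ {X Y : Type u}, (X → Y) → P X → P Y)
    (fE_mono : ∀ {X Y : Type u} (f : X → Y), Monotone (fE f))
    (fA_mono : ∀ {X Y : Type u} (f : X → Y), Monotone (fA f))
    (adjE : ∀ {X Y : Type u} (f : X → Y) (p : P X) (q : P Y), fE f p ≤ q ↔ p ≤ map f q)
    (adjA : ∀ {X Y : Type u} (f : X → Y) (p : P X) (q : P Y), q ≤ fA f p ↔ map f q ≤ p)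
    (BC : ∀ {X X₁ X₂ Y : Type u} (f₁ : X → X₁) (f₂ : X → X₂) (g₁ : X₁ → Y) (g₂ : X₂ → Y),
      g₁ ∘ f₁ = g₂ ∘ f₂ →
      (∀ (x₁ : X₁) (x₂ : X₂), g₁ x₁ = g₂ x₂ → ∃! x : X, f₁ x = x₁ ∧ f₂ x = x₂) →
      fE f₁ ∘ map f₂ = map g₁ ∘ fE g₂ ∧ fA f₁ ∘ map f₂ = map g₁ ∘ fA g₂)
    (Sig : Type u) (tr : P Sig)
    (htr : ∀ X : Type u, Function.Surjective (fun σ : X → Sig => map σ tr))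
    (dSup dInf : Set Sig → Sig)
    (hdSup : map dSup tr = fE (fun z : {z : Sig × Set Sig // z.1 ∈ z.2} => z.1.2)
      (map (fun z : {z : Sig × Set Sig // z.1 ∈ z.2} => z.1.1) tr))
    (hdInf : map dInf tr = fA (fun z : {z : Sig × Set Sig // z.1 ∈ z.2} => z.1.2)
      (map (fun z : {z : Sig × Set Sig // z.1 ∈ z.2} => z.1.1) tr))
    :
    map (fun z : {z : Set Sig × Set Sig // z.1 ⊆ z.2} => dSup z.1.1) tr
      ≤ map (fun z : {z : Set Sig × Set Sig // z.1 ⊆ z.2} => dSup z.1.2) tr ∧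
    map (fun z : {z : Set Sig × Set Sig // z.1 ⊆ z.2} => dInf z.1.2) tr
      ≤ map (fun z : {z : Set Sig × Set Sig // z.1 ⊆ z.2} => dInf z.1.1) tr := by
  classical
  have mcomp : ∀ {X Y Z : Type u} (f : X → Y) (g : Y → Z) (p : P Z),
      map (g ∘ f) p = map f (map g p) := fun f g p => congrFun (map_comp f g) p
  have mono : ∀ {X Y : Type u} (f : X → Y) {p q : P Y}, p ≤ q → map f p ≤ map f q := by
    intro X Y f p q h
    have h1 : map f p = map f (p ⊓ q) := by rw [inf_eq_left.mpr h]
    rw [h1, map_inf]; exact inf_le_right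
  -- abbreviations
  set E := {z : Sig × Set Sig // z.1 ∈ z.2} with hEdef
  set F := {z : Set Sig × Set Sig // z.1 ⊆ z.2} with hFdef
  let e₁ : E → Sig := fun z => z.1.1
  let e₂ : E → Set Sig := fun z => z.1.2
  let f₁ : F → Set Sig := fun z => z.1.1
  let f₂ : F → Set Sig := fun z => z.1.2
  let p : P E := map e₁ tr
  -- pullback of e₂ along f₁
  let G := {w : E × F // w.1.1.2 = w.2.1.1}
  let gF : G → F := fun w => w.1.2
  let gE : G → E := fun w => w.1.1
  have commG : f₁ ∘ gF = e₂ ∘ gE := by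
    funext w; exact w.2.symm
  have pbG : ∀ (x₁ : F) (x₂ : E), f₁ x₁ = e₂ x₂ → ∃! w : G, gF w = x₁ ∧ gE w = x₂ := by
    intro x₁ x₂ h
    refine ⟨⟨(x₂, x₁), h.symm⟩, ⟨rfl, rfl⟩, ?_⟩
    rintro ⟨⟨a, b⟩, hab⟩ ⟨h1, h2⟩
    simp only [gF, gE] at h1 h2
    subst h1; subst h2; rfl
  have BCG := BC gF gE f₁ e₂ commG pbG
  -- pullback of e₂ along f₂
  let G' := {w : E × F // w.1.1.2 = w.2.1.2}
  let gF' : G' → F := fun w => w.1.2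
  let gE' : G' → E := fun w => w.1.1
  have commG' : f₂ ∘ gF' = e₂ ∘ gE' := by
    funext w; exact w.2.symm
  have pbG' : ∀ (x₁ : F) (x₂ : E), f₂ x₁ = e₂ x₂ → ∃! w : G', gF' w = x₁ ∧ gE' w = x₂ := by
    intro x₁ x₂ h
    refine ⟨⟨(x₂, x₁), h.symm⟩, ⟨rfl, rfl⟩, ?_⟩
    rintro ⟨⟨a, b⟩, hab⟩ ⟨h1, h2⟩
    simp only [gF', gE'] at h1 h2
    subst h1; subst h2; rfl
  have BCG' := BC gF' gE' f₂ e₂ commG' pbG'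
  -- map k : G → E sending (ξ, s, s') to (ξ, s')
  let k : G → E := fun w => ⟨(w.1.1.1.1, w.1.2.1.2), w.1.2.2 (w.2 ▸ w.1.1.2)⟩
  -- map m : G → G'
  let m : G → G' := fun w => ⟨(k w, w.1.2), rfl⟩
  have unitE : p ≤ map e₂ (fE e₂ p) := (adjE e₂ p (fE e₂ p)).mp le_rfl
  have counitA : map gF' (fA gF' (map gE' p)) ≤ map gE' p :=
    (adjA gF' (map gE' p) (fA gF' (map gE' p))).mp le_rfl
  constructor
  · -- Sup monotone
    show map (dSup ∘ f₁) tr ≤ map (dSup ∘ f₂) tr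
    rw [mcomp f₁ dSup tr, mcomp f₂ dSup tr, hdSup]
    have lhs_eq : map f₁ (fE e₂ p) = fE gF (map gE p) := (congrFun BCG.1 p).symm
    rw [lhs_eq]
    have hkE : map gE p = map k p := by
      show map gE (map e₁ tr) = map k (map e₁ tr)
      rw [← mcomp gE e₁ tr, ← mcomp k e₁ tr]; rfl
    rw [hkE]
    rw [adjE]
    have step : map gF (map f₂ (fE e₂ p)) = map k (map e₂ (fE e₂ p)) := by
      rw [← mcomp gF f₂ (fE e₂ p), ← mcomp k e₂ (fE e₂ p)]; rfl
    rw [step]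
    exact mono k unitE
  · -- Inf antitone
    show map (dInf ∘ f₂) tr ≤ map (dInf ∘ f₁) tr
    rw [mcomp f₂ dInf tr, mcomp f₁ dInf tr, hdInf]
    have lhs_eq : map f₂ (fA e₂ p) = fA gF' (map gE' p) := (congrFun BCG'.2 p).symm
    have rhs_eq : map f₁ (fA e₂ p) = fA gF (map gE p) := (congrFun BCG.2 p).symm
    rw [lhs_eq, rhs_eq]
    rw [adjA]
    have step : map gF (fA gF' (map gE' p)) = map m (map gF' (fA gF' (map gE' p))) := by
      rw [← mcomp m gF' (fA gF' (map gE' p))]; rfl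
    rw [step]
    have := mono m counitA
    refine le_trans this ?_
    have : map m (map gE' p) = map gE p := by
      show map m (map gE' (map e₁ tr)) = map gE (map e₁ tr)
      rw [← mcomp gE' e₁ tr, ← mcomp m (e₁ ∘ gE') tr, ← mcomp gE e₁ tr]; rfl
    rw [this]
end

section
/- Let P be a Set-based tripos with generic predicate tr_Σ ∈ P Σ, and let ⋁̇, ⋀̇ ∈ Σ^{𝒫(Σ)} be codes with ⟦⋁̇⟧_{𝒫(Σ)} = ∃e₂(⟦e₁⟧_E) and ⟦⋀̇⟧_{𝒫(Σ)} = ∀e₂(⟦e₁⟧_E) for the membership relation E := {(ξ,s) : ξ ∈ s} ⊆ Σ × 𝒫(Σ) with projections e₁, e₂. Then for every set X and all families a, b ∈ 𝒫(Σ)^X with a_x ⊆ b_x for all x ∈ X: ⟦⋁̇ ∘ a⟧_X ≤ ⟦⋁̇ ∘ b⟧_X and ⟦⋀̇ ∘ a⟧_X ≥ ⟦⋀̇ ∘ b⟧_X. -/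
universe u v

theorem quantifiers_monotone_antitone_families
    (P : Type u → Type v) [∀ X, HeytingAlgebra (P X)]
    (map : ∀ {X Y : Type u}, (X → Y) → P Y → P X)
    (map_id : ∀ (X : Type u), map (id : X → X) = id)
    (map_comp : ∀ {X Y Z : Type u} (f : X → Y) (g : Y → Z), map (g ∘ f) = map f ∘ map g)
    (map_inf : ∀ {X Y : Type u} (f : X → Y) (p q : P Y), map f (p ⊓ q) = map f p ⊓ map f q)
    (map_sup : ∀ {X Y : Type u} (f : X → Y) (p q : P Y), map f (p ⊔ q) = map f p ⊔ map f q)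
    (map_himp : ∀ {X Y : Type u} (f : X → Y) (p q : P Y), map f (p ⇨ q) = map f p ⇨ map f q)
    (map_top : ∀ {X Y : Type u} (f : X → Y), map f (⊤ : P Y) = ⊤)
    (map_bot : ∀ {X Y : Type u} (f : X → Y), map f (⊥ : P Y) = ⊥)
    (fE fA : ∀ {X Y : Type u}, (X → Y) → P X → P Y)
    (fE_mono : ∀ {X Y : Type u} (f : X → Y), Monotone (fE f))
    (fA_mono : ∀ {X Y : Type u} (f : X → Y), Monotone (fA f))
    (adjE : ∀ {X Y : Type u} (f : X → Y) (p : P X) (q : P Y), fE f p ≤ q ↔ p ≤ map f q)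
    (adjA : ∀ {X Y : Type u} (f : X → Y) (p : P X) (q : P Y), q ≤ fA f p ↔ map f q ≤ p)
    (BC : ∀ {X X₁ X₂ Y : Type u} (f₁ : X → X₁) (f₂ : X → X₂) (g₁ : X₁ → Y) (g₂ : X₂ → Y),
      g₁ ∘ f₁ = g₂ ∘ f₂ →
      (∀ (x₁ : X₁) (x₂ : X₂), g₁ x₁ = g₂ x₂ → ∃! x : X, f₁ x = x₁ ∧ f₂ x = x₂) →
      fE f₁ ∘ map f₂ = map g₁ ∘ fE g₂ ∧ fA f₁ ∘ map f₂ = map g₁ ∘ fA g₂)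
    (Sig : Type u) (tr : P Sig)
    (htr : ∀ X : Type u, Function.Surjective (fun σ : X → Sig => map σ tr))
    (dSup dInf : Set Sig → Sig)
    (hdSup : map dSup tr = fE (fun z : {z : Sig × Set Sig // z.1 ∈ z.2} => z.1.2)
      (map (fun z : {z : Sig × Set Sig // z.1 ∈ z.2} => z.1.1) tr))
    (hdInf : map dInf tr = fA (fun z : {z : Sig × Set Sig // z.1 ∈ z.2} => z.1.2)
      (map (fun z : {z : Sig × Set Sig // z.1 ∈ z.2} => z.1.1) tr))
    (X : Type u) (a b : X → Set Sig) (hab : ∀ x, a x ⊆ b x) :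
    map (dSup ∘ a) tr ≤ map (dSup ∘ b) tr ∧
    map (dInf ∘ b) tr ≤ map (dInf ∘ a) tr := by
  classical
  have map_mono : ∀ {X Y : Type u} (f : X → Y), Monotone (map f) := by
    intro X Y f p q hpq
    have h : p ⊓ q = p := inf_eq_left.mpr hpq
    calc map f p = map f (p ⊓ q) := by rw [h]
      _ = map f p ⊓ map f q := map_inf f p q
      _ ≤ map f q := inf_le_right
  have key : ∀ (c : X → Set Sig),
      map c (fE (fun z : {z : Sig × Set Sig // z.1 ∈ z.2} => z.1.2)
        (map (fun z : {z : Sig × Set Sig // z.1 ∈ z.2} => z.1.1) tr))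
        = fE (fun z : {z : Sig × X // z.1 ∈ c z.2} => z.1.2)
          (map (fun z : {z : Sig × X // z.1 ∈ c z.2} => z.1.1) tr)
      ∧ map c (fA (fun z : {z : Sig × Set Sig // z.1 ∈ z.2} => z.1.2)
        (map (fun z : {z : Sig × Set Sig // z.1 ∈ z.2} => z.1.1) tr))
        = fA (fun z : {z : Sig × X // z.1 ∈ c z.2} => z.1.2)
          (map (fun z : {z : Sig × X // z.1 ∈ c z.2} => z.1.1) tr) := by
    intro c
    set f₂ : {z : Sig × X // z.1 ∈ c z.2} → {z : Sig × Set Sig // z.1 ∈ z.2} :=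
      fun z => ⟨(z.1.1, c z.1.2), z.2⟩ with hf₂
    have hcomm : c ∘ (fun z : {z : Sig × X // z.1 ∈ c z.2} => z.1.2)
        = (fun z : {z : Sig × Set Sig // z.1 ∈ z.2} => z.1.2) ∘ f₂ := rfl
    have hpb : ∀ (x : X) (w : {z : Sig × Set Sig // z.1 ∈ z.2}), c x = w.1.2 →
        ∃! z : {z : Sig × X // z.1 ∈ c z.2},
          (fun z : {z : Sig × X // z.1 ∈ c z.2} => z.1.2) z = x ∧ f₂ z = w := by
      intro x w hw
      obtain ⟨⟨ξw, s⟩, hs⟩ := w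
      simp only at hw
      refine ⟨⟨(ξw, x), by rw [hw]; exact hs⟩, ⟨rfl, ?_⟩, ?_⟩
      · exact Subtype.ext (Prod.ext rfl hw)
      · rintro ⟨⟨ξ, x'⟩, hz⟩ ⟨h1, h2⟩
        apply Subtype.ext
        have hξ : ξ = ξw := congrArg (fun t => t.1.1) h2
        simp only at h1
        exact Prod.ext hξ h1
    obtain ⟨h1, h2⟩ := BC (fun z : {z : Sig × X // z.1 ∈ c z.2} => z.1.2) f₂ c
      (fun z : {z : Sig × Set Sig // z.1 ∈ z.2} => z.1.2) hcomm hpb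
    have he : map f₂ (map (fun z : {z : Sig × Set Sig // z.1 ∈ z.2} => z.1.1) tr)
        = map (fun z : {z : Sig × X // z.1 ∈ c z.2} => z.1.1) tr := by
      have h := congrFun (map_comp f₂ (fun z : {z : Sig × Set Sig // z.1 ∈ z.2} => z.1.1)) tr
      simp only [Function.comp_apply] at h
      rw [← h]
      rfl
    have h1' := congrFun h1 (map (fun z : {z : Sig × Set Sig // z.1 ∈ z.2} => z.1.1) tr)
    have h2' := congrFun h2 (map (fun z : {z : Sig × Set Sig // z.1 ∈ z.2} => z.1.1) tr)
    simp only [Function.comp_apply] at h1' h2'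
    exact ⟨by rw [← h1', he], by rw [← h2', he]⟩
  -- the inclusion of membership relations
  set ι : {z : Sig × X // z.1 ∈ a z.2} → {z : Sig × X // z.1 ∈ b z.2} :=
    fun z => ⟨z.1, hab z.1.2 z.2⟩ with hι
  set πa : {z : Sig × X // z.1 ∈ a z.2} → X := fun z => z.1.2
  set πb : {z : Sig × X // z.1 ∈ b z.2} → X := fun z => z.1.2
  set qa : P {z : Sig × X // z.1 ∈ a z.2} :=
    map (fun z : {z : Sig × X // z.1 ∈ a z.2} => z.1.1) tr
  set qb : P {z : Sig × X // z.1 ∈ b z.2} :=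
    map (fun z : {z : Sig × X // z.1 ∈ b z.2} => z.1.1) tr
  have hq : qa = map ι qb := by
    show map (fun z : {z : Sig × X // z.1 ∈ a z.2} => z.1.1) tr = _
    have h := congrFun (map_comp ι (fun z : {z : Sig × X // z.1 ∈ b z.2} => z.1.1)) tr
    simp only [Function.comp_apply] at h
    rw [← h]
    rfl
  have hπ : πa = πb ∘ ι := rfl
  have hda : map (dSup ∘ a) tr = fE πa qa := by
    rw [congrFun (map_comp a dSup) tr, Function.comp_apply, hdSup]
    exact (key a).1
  have hdb : map (dSup ∘ b) tr = fE πb qb := by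
    rw [congrFun (map_comp b dSup) tr, Function.comp_apply, hdSup]
    exact (key b).1
  have hia : map (dInf ∘ a) tr = fA πa qa := by
    rw [congrFun (map_comp a dInf) tr, Function.comp_apply, hdInf]
    exact (key a).2
  have hib : map (dInf ∘ b) tr = fA πb qb := by
    rw [congrFun (map_comp b dInf) tr, Function.comp_apply, hdInf]
    exact (key b).2
  constructor
  · rw [hda, hdb, hq]
    rw [adjE]
    have unit : qb ≤ map πb (fE πb qb) := (adjE πb qb (fE πb qb)).mp le_rfl
    have h := congrFun (map_comp ι πb) (fE πb qb)
    simp only [Function.comp_apply] at h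
    calc map ι qb ≤ map ι (map πb (fE πb qb)) := map_mono ι unit
      _ = map πa (fE πb qb) := by rw [← h]; rfl
  · rw [hia, hib, hq]
    rw [adjA]
    have counit : map πb (fA πb qb) ≤ qb := (adjA πb qb (fA πb qb)).mp le_rfl
    have h := congrFun (map_comp ι πb) (fA πb qb)
    simp only [Function.comp_apply] at h
    calc map πa (fA πb qb) = map ι (map πb (fA πb qb)) := by rw [← h]; rfl
      _ ≤ map ι qb := map_mono ι counit
end

section
/- Let P be a Set-based tripos with generic predicate tr_Σ ∈ P Σ, let →̇ ∈ Σ^(Σ×Σ) and ⋀̇ ∈ Σ^{𝒫(Σ)} be codes with ⟦→̇⟧_{Σ×Σ} = ⟦π⟧_{Σ×Σ} ⇨ ⟦π'⟧_{Σ×Σ} and ⟦⋀̇⟧_{𝒫(Σ)} = ∀e₂(⟦e₁⟧_E), and let A be the set of upward-closed subsets of A₀ (the type inductively generated by ξ̇ for ξ ∈ Σ and s ↦ α for s ∈ 𝒫(Σ), α ∈ A₀, with preorder generated by ξ̇ ≤ ξ̇ and (s ↦ α) ≤ (s' ↦ α') when s ⊆ s' and α ≤ α'). Define φ₀ : A₀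 → Σ by φ₀(ξ̇) := ξ and φ₀(s ↦ α) := (⋀̇ s) →̇ φ₀(α), φ : A → Σ by φ(a) := ⋀̇ {φ₀(α) : α ∈ a}, and tr_A := P φ(tr_Σ) ∈ P A. Then tr_A is a generic predicate for P: for every set X, the map A^X → P X, a ↦ P a(tr_A), is surjective. -/
universe u v

/-- The inductively generated set of atoms `A₀`: a finite list of subsets of `σ`
terminated by an element of `σ`. -/
inductive A0 (σ : Type u) : Type u where
  | base : σ → A0 σ
  | arrow : Set σ → A0 σ → A0 σ

/-- The preorder on atoms, inductively generated by the two rules. -/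
inductive A0.Le {σ : Type u} : A0 σ → A0 σ → Prop where
  | base (ξ : σ) : A0.Le (.base ξ) (.base ξ)
  | arrow {s s' : Set σ} {α α' : A0 σ} :
      s ⊆ s' → A0.Le α α' → A0.Le (.arrow s α) (.arrow s' α')

/-- A subset of `A0 σ` is upward closed w.r.t. the preorder `A0.Le`. -/
def UpClosed {σ : Type u} (a : Set (A0 σ)) : Prop :=
  ∀ α β, α ∈ a → A0.Le α β → β ∈ a

/-- The carrier `A` of the implicative structure: upward-closed subsets of `A0 σ`. -/
def Aof (σ : Type u) : Type u := {a : Set (A0 σ) // UpClosed a}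

/-- The conversion function `φ₀ : A₀ → Σ`. -/
def phi0 {σ : Type u} (dInf : Set σ → σ) (dImp : σ × σ → σ) : A0 σ → σ
  | .base ξ => ξ
  | .arrow s α => dImp (dInf s, phi0 dInf dImp α)

/-- The conversion function `φ : A → Σ`, `φ(a) := ⋀̇ {φ₀(α) : α ∈ a}`. -/
def phiA {σ : Type u} (dInf : Set σ → σ) (dImp : σ × σ → σ) (a : Aof σ) : σ :=
  dInf (phi0 dInf dImp '' a.1)

/-!
Every predicate on `X` is `P σ (tr_Σ)` for some `σ : X → Σ`. Coding `x` by the up-set `{(σ x)̇}`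
gives `φ (code x) = ⋀̇ {σ x}`, so it suffices that `⋀̇ {ξ}` and `ξ` decode to the same predicate
on `Σ`. Unfolding `⋀̇`, this says that `P {·} ∘ ∀e₂ ∘ P e₁` is the identity, which is
Beck–Chevalley for the pullback of `e₂` along `ξ ↦ {ξ}`: its apex is `Σ` itself, with legs `id`
and `ξ ↦ (ξ, {ξ})`.
-/

theorem upClosed_singleton_base {σ : Type u} (ξ : σ) : UpClosed ({.base ξ} : Set (A0 σ)) := by
  rintro α β rfl ⟨⟩
  rfl

def Aof.ofBase {σ : Type u} (ξ : σ) : Aof σ := ⟨{.base ξ}, upClosed_singleton_base ξ⟩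

theorem phiA_ofBase {σ : Type u} (dInf : Set σ → σ) (dImp : σ × σ → σ) (ξ : σ) :
    phiA dInf dImp (Aof.ofBase ξ) = dInf {ξ} :=
  congrArg dInf (Set.image_singleton ..)

abbrev MemRel (S : Type u) : Type u := {z : S × Set S // z.1 ∈ z.2}

theorem memRel_singleton_unique {S : Type u} (ξ : S) (z : MemRel S) (hz : {ξ} = z.1.2) :
    z = ⟨(ξ, {ξ}), rfl⟩ := by
  obtain ⟨⟨η, s⟩, hη⟩ := z
  subst hz
  obtain rfl : η = ξ := hη
  rfl

section Tripos

variable {P : Type u → Type v} [∀ X, PartialOrder (P X)]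
  (map : ∀ {X Y : Type u}, (X → Y) → P Y → P X) (fA : ∀ {X Y : Type u}, (X → Y) → P X → P Y)

theorem fA_id_eq_self (map_id : ∀ X : Type u, map (id : X → X) = id)
    (adjA : ∀ {X Y : Type u} (f : X → Y) (p : P X) (q : P Y), q ≤ fA f p ↔ map f q ≤ p)
    {X : Type u} (p : P X) : fA id p = p :=
  eq_of_forall_le_iff fun q => by rw [adjA, map_id]; rfl

theorem map_singleton_fA_memRel (fE : ∀ {X Y : Type u}, (X → Y) → P X → P Y)
    (map_id : ∀ X : Type u, map (id : X → X) = id)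
    (map_comp : ∀ {X Y Z : Type u} (f : X → Y) (g : Y → Z), map (g ∘ f) = map f ∘ map g)
    (adjA : ∀ {X Y : Type u} (f : X → Y) (p : P X) (q : P Y), q ≤ fA f p ↔ map f q ≤ p)
    (BC : ∀ {X X₁ X₂ Y : Type u} (f₁ : X → X₁) (f₂ : X → X₂) (g₁ : X₁ → Y) (g₂ : X₂ → Y),
      g₁ ∘ f₁ = g₂ ∘ f₂ →
      (∀ (x₁ : X₁) (x₂ : X₂), g₁ x₁ = g₂ x₂ → ∃! x : X, f₁ x = x₁ ∧ f₂ x = x₂) →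
      fE f₁ ∘ map f₂ = map g₁ ∘ fE g₂ ∧ fA f₁ ∘ map f₂ = map g₁ ∘ fA g₂)
    {S : Type u} (q : P S) :
    map (fun ξ : S => ({ξ} : Set S))
      (fA (fun z : MemRel S => z.1.2) (map (fun z : MemRel S => z.1.1) q)) = q := by
  let diag : S → MemRel S := fun ξ => ⟨(ξ, {ξ}), rfl⟩
  have isPullback : ∀ (ξ : S) (z : MemRel S), {ξ} = z.1.2 → ∃! η : S, η = ξ ∧ diag η = z :=
    fun ξ z hz => ⟨ξ, ⟨rfl, (memRel_singleton_unique ξ z hz).symm⟩, fun _ h => h.1⟩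
  have hBC := congrFun (BC id diag _ _ rfl isPullback).2 (map (fun z : MemRel S => z.1.1) q)
  calc _ = fA id (map diag (map (fun z : MemRel S => z.1.1) q)) := hBC.symm
    _ = map ((fun z : MemRel S => z.1.1) ∘ diag) q := by
      rw [fA_id_eq_self map fA map_id adjA, map_comp]
      rfl
    _ = q := by rw [show (fun z : MemRel S => z.1.1) ∘ diag = id from rfl, map_id, id]

end Tripos

theorem trA_is_generic_general
    (P : Type u → Type v) [∀ X, HeytingAlgebra (P X)]
    (map : ∀ {X Y : Type u}, (X → Y) → P Y → P X)
    (map_id : ∀ (X : Type u), map (id : X → X) = id)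
    (map_comp : ∀ {X Y Z : Type u} (f : X → Y) (g : Y → Z), map (g ∘ f) = map f ∘ map g)
    (fE fA : ∀ {X Y : Type u}, (X → Y) → P X → P Y)
    (adjA : ∀ {X Y : Type u} (f : X → Y) (p : P X) (q : P Y), q ≤ fA f p ↔ map f q ≤ p)
    (BC : ∀ {X X₁ X₂ Y : Type u} (f₁ : X → X₁) (f₂ : X → X₂) (g₁ : X₁ → Y) (g₂ : X₂ → Y),
      g₁ ∘ f₁ = g₂ ∘ f₂ →
      (∀ (x₁ : X₁) (x₂ : X₂), g₁ x₁ = g₂ x₂ → ∃! x : X, f₁ x = x₁ ∧ f₂ x = x₂) →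
      fE f₁ ∘ map f₂ = map g₁ ∘ fE g₂ ∧ fA f₁ ∘ map f₂ = map g₁ ∘ fA g₂)
    (Sig : Type u) (tr : P Sig)
    (htr : ∀ X : Type u, Function.Surjective (fun σ : X → Sig => map σ tr))
    (dImp : Sig × Sig → Sig)
    (dInf : Set Sig → Sig)
    (hdInf : map dInf tr = fA (fun z : {z : Sig × Set Sig // z.1 ∈ z.2} => z.1.2)
      (map (fun z : {z : Sig × Set Sig // z.1 ∈ z.2} => z.1.1) tr))
    :
    ∀ X : Type u, Function.Surjective
      (fun a : X → Aof Sig => map a (map (phiA dInf dImp) tr)) := by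
  intro X p
  obtain ⟨σ, rfl⟩ := htr X p
  have dInf_singleton : map (dInf ∘ fun ξ => {ξ}) tr = tr := by
    rw [map_comp, Function.comp_apply, hdInf]
    exact map_singleton_fA_memRel map fA fE map_id map_comp adjA BC tr
  refine ⟨Aof.ofBase ∘ σ, ?_⟩
  calc map (Aof.ofBase ∘ σ) (map (phiA dInf dImp) tr)
      = map ((dInf ∘ fun ξ => {ξ}) ∘ σ) tr := by
        rw [← Function.comp_apply (f := map _), ← map_comp]
        exact congrArg (map · tr) (funext fun x => phiA_ofBase dInf dImp (σ x))
    _ = map σ tr := by rw [map_comp, Function.comp_apply, dInf_singleton]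

theorem trA_is_generic
    (P : Type u → Type v) [∀ X, HeytingAlgebra (P X)]
    (map : ∀ {X Y : Type u}, (X → Y) → P Y → P X)
    (map_id : ∀ (X : Type u), map (id : X → X) = id)
    (map_comp : ∀ {X Y Z : Type u} (f : X → Y) (g : Y → Z), map (g ∘ f) = map f ∘ map g)
    (map_inf : ∀ {X Y : Type u} (f : X → Y) (p q : P Y), map f (p ⊓ q) = map f p ⊓ map f q)
    (map_sup : ∀ {X Y : Type u} (f : X → Y) (p q : P Y), map f (p ⊔ q) = map f p ⊔ map f q)
    (map_himp : ∀ {X Y : Type u} (f : X → Y) (p q : P Y), map f (p ⇨ q) = map f p ⇨ map f q)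
    (map_top : ∀ {X Y : Type u} (f : X → Y), map f (⊤ : P Y) = ⊤)
    (map_bot : ∀ {X Y : Type u} (f : X → Y), map f (⊥ : P Y) = ⊥)
    (fE fA : ∀ {X Y : Type u}, (X → Y) → P X → P Y)
    (fE_mono : ∀ {X Y : Type u} (f : X → Y), Monotone (fE f))
    (fA_mono : ∀ {X Y : Type u} (f : X → Y), Monotone (fA f))
    (adjE : ∀ {X Y : Type u} (f : X → Y) (p : P X) (q : P Y), fE f p ≤ q ↔ p ≤ map f q)
    (adjA : ∀ {X Y : Type u} (f : X → Y) (p : P X) (q : P Y), q ≤ fA f p ↔ map f q ≤ p)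
    (BC : ∀ {X X₁ X₂ Y : Type u} (f₁ : X → X₁) (f₂ : X → X₂) (g₁ : X₁ → Y) (g₂ : X₂ → Y),
      g₁ ∘ f₁ = g₂ ∘ f₂ →
      (∀ (x₁ : X₁) (x₂ : X₂), g₁ x₁ = g₂ x₂ → ∃! x : X, f₁ x = x₁ ∧ f₂ x = x₂) →
      fE f₁ ∘ map f₂ = map g₁ ∘ fE g₂ ∧ fA f₁ ∘ map f₂ = map g₁ ∘ fA g₂)
    (Sig : Type u) (tr : P Sig)
    (htr : ∀ X : Type u, Function.Surjective (fun σ : X → Sig => map σ tr))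
    (dImp : Sig × Sig → Sig)
    (hdImp : map dImp tr
      = map (Prod.fst : Sig × Sig → Sig) tr ⇨ map (Prod.snd : Sig × Sig → Sig) tr)
    (dInf : Set Sig → Sig)
    (hdInf : map dInf tr = fA (fun z : {z : Sig × Set Sig // z.1 ∈ z.2} => z.1.2)
      (map (fun z : {z : Sig × Set Sig // z.1 ∈ z.2} => z.1.1) tr))
    :
    ∀ X : Type u, Function.Surjective
      (fun a : X → Aof Sig => map a (map (phiA dInf dImp) tr)) :=
  trA_is_generic_general P map map_id map_comp fE fA adjA BC Sig tr htr dImp dInf hdInf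
end

section
/- Let P be a Set-based tripos with generic predicate tr_Σ ∈ P Σ, with codes →̇ ∈ Σ^(Σ×Σ) and ⋀̇ ∈ Σ^{𝒫(Σ)} satisfying ⟦→̇⟧_{Σ×Σ} = ⟦π⟧_{Σ×Σ} ⇨ ⟦π'⟧_{Σ×Σ} and ⟦⋀̇⟧_{𝒫(Σ)} = ∀e₂(⟦e₁⟧_E). Let A be the set of upward-closed subsets of A₀ (inductively generated by ξ̇ for ξ ∈ Σ and s ↦ α for s ∈ 𝒫(Σ), α ∈ A₀, with preorder generated by ξ̇ ≤ ξ̇ and (s ↦ α) ≤ (s' ↦ α') when s ⊆ s' and α ≤ α'), ordered by a ≼ b iff a ⊇ b, so that meets ⨅ in A are unions; define φ₀ : A₀ → Σ by φ₀(ξ̇) := ξ, φ₀(s ↦ α) := (⋀̇ s) →̇ φ₀(α), φ(a) := ⋀̇ {φ₀(α) : α ∈ a}, tr_A := P φ(tr_Σ), and ⟪a⟫_X := P a(tr_A) for a ∈ A^X. Then for every family a ∈ A^X and every function f : X → Y: ⟪y ↦ ⨅{a_x : x ∈ f⁻¹(y)}⟫_Y = ∀f(⟪a⟫_X). -/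
universe u v

/-- Meets in `A = Aof σ` (w.r.t. reverse inclusion) are given by unions. -/
def AInf {σ : Type u} (B : Set (Aof σ)) : Aof σ :=
  ⟨{α | ∃ b ∈ B, α ∈ (b : Aof σ).1},
   fun _ β ⟨b, hb, hα⟩ hle => ⟨b, hb, b.2 _ β hα hle⟩⟩

theorem forall_via_AInf
    (P : Type u → Type v) [∀ X, HeytingAlgebra (P X)]
    (map : ∀ {X Y : Type u}, (X → Y) → P Y → P X)
    (map_id : ∀ (X : Type u), map (id : X → X) = id)
    (map_comp : ∀ {X Y Z : Type u} (f : X → Y) (g : Y → Z), map (g ∘ f) = map f ∘ map g)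
    (map_inf : ∀ {X Y : Type u} (f : X → Y) (p q : P Y), map f (p ⊓ q) = map f p ⊓ map f q)
    (map_sup : ∀ {X Y : Type u} (f : X → Y) (p q : P Y), map f (p ⊔ q) = map f p ⊔ map f q)
    (map_himp : ∀ {X Y : Type u} (f : X → Y) (p q : P Y), map f (p ⇨ q) = map f p ⇨ map f q)
    (map_top : ∀ {X Y : Type u} (f : X → Y), map f (⊤ : P Y) = ⊤)
    (map_bot : ∀ {X Y : Type u} (f : X → Y), map f (⊥ : P Y) = ⊥)
    (fE fA : ∀ {X Y : Type u}, (X → Y) → P X → P Y)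
    (fE_mono : ∀ {X Y : Type u} (f : X → Y), Monotone (fE f))
    (fA_mono : ∀ {X Y : Type u} (f : X → Y), Monotone (fA f))
    (adjE : ∀ {X Y : Type u} (f : X → Y) (p : P X) (q : P Y), fE f p ≤ q ↔ p ≤ map f q)
    (adjA : ∀ {X Y : Type u} (f : X → Y) (p : P X) (q : P Y), q ≤ fA f p ↔ map f q ≤ p)
    (BC : ∀ {X X₁ X₂ Y : Type u} (f₁ : X → X₁) (f₂ : X → X₂) (g₁ : X₁ → Y) (g₂ : X₂ → Y),
      g₁ ∘ f₁ = g₂ ∘ f₂ →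
      (∀ (x₁ : X₁) (x₂ : X₂), g₁ x₁ = g₂ x₂ → ∃! x : X, f₁ x = x₁ ∧ f₂ x = x₂) →
      fE f₁ ∘ map f₂ = map g₁ ∘ fE g₂ ∧ fA f₁ ∘ map f₂ = map g₁ ∘ fA g₂)
    (Sig : Type u) (tr : P Sig)
    (htr : ∀ X : Type u, Function.Surjective (fun σ : X → Sig => map σ tr))
    (dImp : Sig × Sig → Sig)
    (hdImp : map dImp tr
      = map (Prod.fst : Sig × Sig → Sig) tr ⇨ map (Prod.snd : Sig × Sig → Sig) tr)
    (dInf : Set Sig → Sig)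
    (hdInf : map dInf tr = fA (fun z : {z : Sig × Set Sig // z.1 ∈ z.2} => z.1.2)
      (map (fun z : {z : Sig × Set Sig // z.1 ∈ z.2} => z.1.1) tr))
    {X Y : Type u} (a : X → Aof Sig) (f : X → Y) :
    map (fun y => AInf (a '' (f ⁻¹' {y}))) (map (phiA dInf dImp) tr)
      = fA f (map a (map (phiA dInf dImp) tr)) := by
  classical
  -- map is monotone
  have map_mono : ∀ {W Z : Type u} (g : W → Z), Monotone (map g) := by
    intro W Z g p q hpq
    have h : p ⊓ q = p := inf_eq_left.mpr hpq
    calc map g p = map g (p ⊓ q) := by rw [h]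
      _ = map g p ⊓ map g q := map_inf g p q
      _ ≤ map g q := inf_le_right
  -- counit of the right adjoint
  have counit : ∀ {W Z : Type u} (g : W → Z) (p : P W), map g (fA g p) ≤ p := by
    intro W Z g p
    exact (adjA g p (fA g p)).mp le_rfl
  -- composition of right adjoints
  have fA_comp : ∀ {W Z V : Type u} (g : W → Z) (h : Z → V) (p : P W),
      fA (h ∘ g) p = fA h (fA g p) := by
    intro W Z V g h p
    apply le_antisymm
    · refine (adjA h (fA g p) _).mpr ((adjA g p _).mpr ?_)
      have hc := congrFun (map_comp g h) (fA (h ∘ g) p)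
      simp only [Function.comp_apply] at hc
      rw [← hc]
      exact counit (h ∘ g) p
    · refine (adjA (h ∘ g) p _).mpr ?_
      have hc := congrFun (map_comp g h) (fA h (fA g p))
      simp only [Function.comp_apply] at hc
      rw [hc]
      exact le_trans (map_mono g (counit h (fA g p))) (counit g p)
  -- for a surjection g, fA g ∘ map g = id
  have fA_section : ∀ {W Z : Type u} (g : W → Z), Function.Surjective g →
      ∀ p : P Z, fA g (map g p) = p := by
    intro W Z g hg p
    apply le_antisymm
    · set s : Z → W := Function.surjInv hg with hs
      have hgs : g ∘ s = id := funext fun z => Function.surjInv_eq hg z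
      have h1 : map g (fA g (map g p)) ≤ map g p := counit g (map g p)
      have h2 : map s (map g (fA g (map g p))) ≤ map s (map g p) := map_mono s h1
      have h3 : ∀ q : P Z, map s (map g q) = q := by
        intro q
        have := congrFun (map_comp s g) q
        simp only [Function.comp_apply] at this
        rw [← this, hgs, map_id]
        rfl
      rw [h3, h3] at h2
      exact h2
    · exact (adjA g (map g p) p).mpr le_rfl
  -- the semantics of dInf ∘ s, via Beck–Chevalley
  have key : ∀ {Z : Type u} (s : Z → Set Sig),
      map (fun z => dInf (s z)) tr
        = fA (fun w : {w : Z × Sig // w.2 ∈ s w.1} => w.1.1)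
            (map (fun w : {w : Z × Sig // w.2 ∈ s w.1} => w.1.2) tr) := by
    intro Z s
    have hBC := BC (fun w : {w : Z × Sig // w.2 ∈ s w.1} => w.1.1)
      (fun w : {w : Z × Sig // w.2 ∈ s w.1} =>
        (⟨(w.1.2, s w.1.1), w.2⟩ : {z : Sig × Set Sig // z.1 ∈ z.2}))
      s (fun z : {z : Sig × Set Sig // z.1 ∈ z.2} => z.1.2)
      rfl ?_
    · have h2 := congrFun hBC.2 (map (fun z : {z : Sig × Set Sig // z.1 ∈ z.2} => z.1.1) tr)
      simp only [Function.comp_apply] at h2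
      have hL : map (fun w : {w : Z × Sig // w.2 ∈ s w.1} =>
            (⟨(w.1.2, s w.1.1), w.2⟩ : {z : Sig × Set Sig // z.1 ∈ z.2}))
          (map (fun z : {z : Sig × Set Sig // z.1 ∈ z.2} => z.1.1) tr)
          = map (fun w : {w : Z × Sig // w.2 ∈ s w.1} => w.1.2) tr := by
        have := congrFun (map_comp
          (fun w : {w : Z × Sig // w.2 ∈ s w.1} =>
            (⟨(w.1.2, s w.1.1), w.2⟩ : {z : Sig × Set Sig // z.1 ∈ z.2}))
          (fun z : {z : Sig × Set Sig // z.1 ∈ z.2} => z.1.1)) tr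
        simp only [Function.comp_apply] at this
        rw [← this]
        rfl
      rw [hL, ← hdInf] at h2
      have hR := congrFun (map_comp s dInf) tr
      simp only [Function.comp_apply] at hR
      rw [← hR] at h2
      exact h2.symm
    · intro z z' hzz'
      -- hzz' : s z = z'.1.2
      refine ⟨⟨(z, z'.1.1), by rw [hzz']; exact z'.2⟩, ⟨rfl, ?_⟩, ?_⟩
      · apply Subtype.ext
        exact Prod.ext rfl hzz'
      · rintro ⟨⟨z₀, ξ₀⟩, hmem⟩ ⟨h1, h2⟩
        apply Subtype.ext
        have : ξ₀ = z'.1.1 := congrArg (fun w => w.1.1) h2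
        simp only at h1
        exact Prod.ext h1 this
  -- rewriting map c (map phiA tr)
  have hφ : ∀ {Z : Type u} (c : Z → Aof Sig),
      map c (map (phiA dInf dImp) tr)
        = map (fun z => dInf (phi0 dInf dImp '' (c z).1)) tr := by
    intro Z c
    have := congrFun (map_comp c (phiA dInf dImp)) tr
    simp only [Function.comp_apply] at this
    rw [← this]
    rfl
  -- abbreviations
  set sa : X → Set Sig := fun x => phi0 dInf dImp '' (a x).1 with hsa
  set sb : Y → Set Sig := fun y => phi0 dInf dImp '' (AInf (a '' (f ⁻¹' {y}))).1 with hsb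
  rw [hφ (fun y => AInf (a '' (f ⁻¹' {y}))), hφ a]
  rw [key sa, key sb]
  -- now relate the two ∀'s via the surjection g : Ea → Eb
  set Ea := {w : X × Sig // w.2 ∈ sa w.1} with hEa
  set Eb := {w : Y × Sig // w.2 ∈ sb w.1} with hEb
  have gmem : ∀ w : Ea, w.1.2 ∈ sb (f w.1.1) := by
    rintro ⟨⟨x, ξ⟩, hξ⟩
    obtain ⟨α, hα, hφα⟩ := hξ
    exact ⟨α, ⟨a x, ⟨x, rfl, rfl⟩, hα⟩, hφα⟩
  set g : Ea → Eb := fun w => ⟨(f w.1.1, w.1.2), gmem w⟩ with hg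
  have hgsurj : Function.Surjective g := by
    rintro ⟨⟨y, ξ⟩, hξ⟩
    obtain ⟨α, ⟨b', ⟨x, hx, rfl⟩, hαb⟩, hφα⟩ := hξ
    have hxy : f x = y := hx
    refine ⟨⟨(x, ξ), ⟨α, hαb, hφα⟩⟩, ?_⟩
    apply Subtype.ext
    exact Prod.ext hxy rfl
  have hcomm1 : f ∘ (fun w : Ea => w.1.1) = (fun w : Eb => w.1.1) ∘ g := rfl
  have hv : (fun w : Ea => w.1.2) = (fun w : Eb => w.1.2) ∘ g := rfl
  calc fA (fun w : Eb => w.1.1) (map (fun w : Eb => w.1.2) tr)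
      = fA (fun w : Eb => w.1.1)
          (fA g (map g (map (fun w : Eb => w.1.2) tr))) := by
        rw [fA_section g hgsurj]
    _ = fA ((fun w : Eb => w.1.1) ∘ g) (map g (map (fun w : Eb => w.1.2) tr)) := by
        rw [fA_comp]
    _ = fA (f ∘ (fun w : Ea => w.1.1)) (map (fun w : Ea => w.1.2) tr) := by
        rw [← hcomm1]
        congr 1
        have := congrFun (map_comp g (fun w : Eb => w.1.2)) tr
        simp only [Function.comp_apply] at this
        rw [← this, ← hv]
    _ = fA f (fA (fun w : Ea => w.1.1) (map (fun w : Ea => w.1.2) tr)) := by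
        rw [fA_comp]
end

section
/- Let P be a Set-based tripos with generic predicate tr_Σ ∈ P Σ, with codes →̇ ∈ Σ^(Σ×Σ) and ⋀̇ ∈ Σ^{𝒫(Σ)} satisfying ⟦→̇⟧_{Σ×Σ} = ⟦π⟧_{Σ×Σ} ⇨ ⟦π'⟧_{Σ×Σ} and ⟦⋀̇⟧_{𝒫(Σ)} = ∀e₂(⟦e₁⟧_E). Let A be the set of upward-closed subsets of A₀ (inductively generated by ξ̇ for ξ ∈ Σ and s ↦ α for s ∈ 𝒫(Σ), α ∈ A₀, with preorder generated by ξ̇ ≤ ξ̇ and (s ↦ α) ≤ (s' ↦ α') when s ⊆ s' and α ≤ α'), ordered by a ≼ b iff a ⊇ b; define φ₀ : A₀ → Σ by φ₀(ξ̇) := ξ, φ₀(s ↦ α) := (⋀̇ s) →̇ φ₀(α), φ̃₀(a) := {φ₀(α) : α ∈ a}, s^⊆ := {s' : s ⊆ s'}, the implication a → b := {s ↦ β : s ∈ φ̃₀(a)^⊆, β ∈ b} on A, φ(a) := ⋀̇ φ̃₀(a), tr_A := P φ(tr_Σ), and ⟪a⟫_X := P a(tr_A) for a ∈ A^X. Then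 for every set X and all families a, b ∈ A^X: ⟪x ↦ (a_x → b_x)⟫_X = ⟪a⟫_X ⇨ ⟪b⟫_X in the Heyting algebra P X. -/
universe u v

/-- The implication of the implicative structure `A = Aof σ`:
`a → b := { s ↦ β : φ̃₀(a) ⊆ s, β ∈ b }`. -/
def Aimp {σ : Type u} (dInf : Set σ → σ) (dImp : σ × σ → σ)
    (a b : Aof σ) : Aof σ :=
  ⟨{γ | ∃ (s : Set σ) (β : A0 σ),
      γ = A0.arrow s β ∧ phi0 dInf dImp '' a.1 ⊆ s ∧ β ∈ b.1}, by
    rintro γ γ' ⟨s, β, rfl, hs, hβ⟩ hle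
    cases hle with
    | arrow hss hββ => exact ⟨_, _, rfl, hs.trans hss, b.2 _ _ hβ hββ⟩⟩

/-! `⟪a⟫_X` is the decoding of `x ↦ ⋀̇ φ̃₀(a x)`, and by Beck–Chevalley the decoding of a coded
infimum `⋀̇ S` is the universal quantification of `⟦ξ⟧` over the pullback `{(y, ξ) : ξ ∈ S y}`
of the membership relation: it is the greatest predicate below `⟦ξ⟧` for every member `ξ`, and it
is antitone in `S`. Since `φ̃₀(a → b)` consists of the codes `(⋀̇ s) →̇ ξ` with `φ̃₀(a) ⊆ s` and
`ξ ∈ φ̃₀(b)`, the member `s = φ̃₀(a)` gives `⟪a → b⟫ ⊓ ⟪a⟫ ≤ ⟪b⟫` by modus ponens, and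
antitonicity in `s` gives the converse. -/

theorem image_phi0_Aimp {σ : Type u} (dInf : Set σ → σ) (dImp : σ × σ → σ) (a b : Aof σ) :
    phi0 dInf dImp '' (Aimp dInf dImp a b).1 =
      Set.image2 (fun s ξ => dImp (dInf s, ξ)) (Set.Ici (phi0 dInf dImp '' a.1))
        (phi0 dInf dImp '' b.1) := by
  ext ζ
  constructor
  · rintro ⟨_, ⟨s, β, rfl, hs, hβ⟩, rfl⟩
    exact ⟨s, hs, _, ⟨β, hβ, rfl⟩, rfl⟩
  · rintro ⟨s, hs, _, ⟨β, hβ, rfl⟩, rfl⟩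
    exact ⟨_, ⟨s, β, rfl, hs, hβ⟩, rfl⟩

structure ForallHyperdoctrine (P : Type u → Type v) [∀ X, HeytingAlgebra (P X)] where
  map : ∀ {X Y : Type u}, (X → Y) → P Y → P X
  map_comp : ∀ {X Y Z : Type u} (f : X → Y) (g : Y → Z), map (g ∘ f) = map f ∘ map g
  map_inf : ∀ {X Y : Type u} (f : X → Y) (p q : P Y), map f (p ⊓ q) = map f p ⊓ map f q
  map_himp : ∀ {X Y : Type u} (f : X → Y) (p q : P Y), map f (p ⇨ q) = map f p ⇨ map f q
  fA : ∀ {X Y : Type u}, (X → Y) → P X → P Y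
  le_fA_iff : ∀ {X Y : Type u} (f : X → Y) (p : P X) (q : P Y), q ≤ fA f p ↔ map f q ≤ p
  fA_beckChevalley : ∀ {X X₁ X₂ Y : Type u} (f₁ : X → X₁) (f₂ : X → X₂) (g₁ : X₁ → Y)
    (g₂ : X₂ → Y), g₁ ∘ f₁ = g₂ ∘ f₂ →
      (∀ (x₁ : X₁) (x₂ : X₂), g₁ x₁ = g₂ x₂ → ∃! x : X, f₁ x = x₁ ∧ f₂ x = x₂) →
      fA f₁ ∘ map f₂ = map g₁ ∘ fA g₂

namespace ForallHyperdoctrine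

variable {P : Type u → Type v} [∀ X, HeytingAlgebra (P X)] (H : ForallHyperdoctrine P)
  {X Y Z : Type u}

theorem map_map (f : X → Y) (g : Y → Z) (r : P Z) : H.map f (H.map g r) = H.map (g ∘ f) r :=
  (congrFun (H.map_comp f g) r).symm

theorem map_mono (f : X → Y) : Monotone (H.map f) := fun p q hpq =>
  calc H.map f p = H.map f (p ⊓ q) := by rw [inf_eq_left.mpr hpq]
    _ = H.map f p ⊓ H.map f q := H.map_inf f p q
    _ ≤ H.map f q := inf_le_right

variable {Sig : Type u} (tr : P Sig)

def IsImpCode (dImp : Sig × Sig → Sig) : Prop :=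
  H.map dImp tr = H.map Prod.fst tr ⇨ H.map Prod.snd tr

def IsInfCode (dInf : Set Sig → Sig) : Prop :=
  H.map dInf tr = H.fA (fun z : {z : Sig × Set Sig // z.1 ∈ z.2} => z.1.2)
    (H.map (fun z : {z : Sig × Set Sig // z.1 ∈ z.2} => z.1.1) tr)

variable {dImp : Sig × Sig → Sig} {dInf : Set Sig → Sig}

theorem map_imp_code (hImp : H.IsImpCode tr dImp) (f g : Y → Sig) :
    H.map (fun y => dImp (f y, g y)) tr = H.map f tr ⇨ H.map g tr := by
  refine (H.map_map (fun y => (f y, g y)) dImp tr).symm.trans ?_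
  rw [hImp, map_himp, map_map, map_map]
  rfl

section InfCode

variable {tr} (hInf : H.IsInfCode tr dInf) (S : Y → Set Sig)
include hInf

theorem map_inf_code_eq :
    H.map (fun y => dInf (S y)) tr =
      H.fA (fun p : {p : Y × Sig // p.2 ∈ S p.1} => p.1.1) (H.map (fun p => p.1.2) tr) := by
  have hBC := H.fA_beckChevalley (fun p : {p : Y × Sig // p.2 ∈ S p.1} => p.1.1)
    (fun p => ⟨(p.1.2, S p.1.1), p.2⟩) S (fun z : {z : Sig × Set Sig // z.1 ∈ z.2} => z.1.2)
    rfl (by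
      rintro y ⟨⟨ξ, s⟩, hξ⟩ (rfl : S y = s)
      refine ⟨⟨(y, ξ), hξ⟩, ⟨rfl, rfl⟩, ?_⟩
      rintro ⟨⟨y', ξ'⟩, hξ'⟩ ⟨rfl, h⟩
      cases h
      rfl)
  refine (H.map_map S dInf tr).symm.trans ?_
  rw [hInf]
  exact (congrFun hBC _).symm.trans (congrArg _ (H.map_map _ _ tr))

theorem le_map_inf_code_iff (r : P Y) :
    r ≤ H.map (fun y => dInf (S y)) tr ↔
      H.map (fun p : {p : Y × Sig // p.2 ∈ S p.1} => p.1.1) r ≤ H.map (fun p => p.1.2) tr := by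
  rw [H.map_inf_code_eq hInf]
  exact H.le_fA_iff _ _ _

theorem map_inf_code_le (σ : Y → Sig) (hσ : ∀ y, σ y ∈ S y) :
    H.map (fun y => dInf (S y)) tr ≤ H.map σ tr := by
  have counit := H.map_mono (fun y => (⟨(y, σ y), hσ y⟩ : {p : Y × Sig // p.2 ∈ S p.1}))
    ((H.le_map_inf_code_iff hInf S _).1 le_rfl)
  rwa [map_map, map_map, map_map] at counit

theorem map_inf_code_anti {S' : Y → Set Sig} (hSS' : ∀ y, S y ⊆ S' y) :
    H.map (fun y => dInf (S' y)) tr ≤ H.map (fun y => dInf (S y)) tr := by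
  rw [H.le_map_inf_code_iff hInf, map_map]
  exact H.map_inf_code_le hInf (fun p : {p : Y × Sig // p.2 ∈ S p.1} => S' p.1.1) _
    fun p => hSS' _ p.2

end InfCode

theorem map_inf_code_image2_imp (hImp : H.IsImpCode tr dImp) (hInf : H.IsInfCode tr dInf)
    (Sa Sb : Y → Set Sig) :
    H.map (fun y => dInf (Set.image2 (fun s ξ => dImp (dInf s, ξ)) (Set.Ici (Sa y)) (Sb y))) tr =
      H.map (fun y => dInf (Sa y)) tr ⇨ H.map (fun y => dInf (Sb y)) tr := by
  set T := fun y => Set.image2 (fun s ξ => dImp (dInf s, ξ)) (Set.Ici (Sa y)) (Sb y)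
  apply le_antisymm
  · rw [le_himp_iff, H.le_map_inf_code_iff hInf Sb, map_inf, map_map, map_map]
    have modusPonens := H.map_inf_code_le hInf (fun p : {p : Y × Sig // p.2 ∈ Sb p.1} => T p.1.1)
      (fun p => dImp (dInf (Sa p.1.1), p.1.2)) fun p => Set.mem_image2_of_mem Set.self_mem_Ici p.2
    rw [H.map_imp_code tr hImp] at modusPonens
    exact (inf_le_inf_right _ modusPonens).trans himp_inf_le
  · rw [H.le_map_inf_code_iff hInf T, map_himp, map_map, map_map]
    choose s hs ξ hξ hp using fun p : {p : Y × Sig // p.2 ∈ T p.1} => p.2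
    rw [show (fun p : {p : Y × Sig // p.2 ∈ T p.1} => p.1.2) = fun p => dImp (dInf (s p), ξ p)
      from funext fun p => (hp p).symm, H.map_imp_code tr hImp]
    exact himp_le_himp (H.map_inf_code_anti hInf _ hs) (H.map_inf_code_le hInf _ ξ hξ)

theorem map_phiA_Aimp (hImp : H.IsImpCode tr dImp) (hInf : H.IsInfCode tr dInf)
    (a b : X → Aof Sig) :
    H.map (fun x => Aimp dInf dImp (a x) (b x)) (H.map (phiA dInf dImp) tr) =
      H.map a (H.map (phiA dInf dImp) tr) ⇨ H.map b (H.map (phiA dInf dImp) tr) := by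
  simp only [map_map, Function.comp_def, phiA, image_phi0_Aimp]
  exact H.map_inf_code_image2_imp tr hImp hInf _ _

end ForallHyperdoctrine

theorem imp_via_Aimp_general
    (P : Type u → Type v) [∀ X, HeytingAlgebra (P X)]
    (map : ∀ {X Y : Type u}, (X → Y) → P Y → P X)
    (map_comp : ∀ {X Y Z : Type u} (f : X → Y) (g : Y → Z), map (g ∘ f) = map f ∘ map g)
    (map_inf : ∀ {X Y : Type u} (f : X → Y) (p q : P Y), map f (p ⊓ q) = map f p ⊓ map f q)
    (map_himp : ∀ {X Y : Type u} (f : X → Y) (p q : P Y), map f (p ⇨ q) = map f p ⇨ map f q)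
    (fE fA : ∀ {X Y : Type u}, (X → Y) → P X → P Y)
    (adjA : ∀ {X Y : Type u} (f : X → Y) (p : P X) (q : P Y), q ≤ fA f p ↔ map f q ≤ p)
    (BC : ∀ {X X₁ X₂ Y : Type u} (f₁ : X → X₁) (f₂ : X → X₂) (g₁ : X₁ → Y) (g₂ : X₂ → Y),
      g₁ ∘ f₁ = g₂ ∘ f₂ →
      (∀ (x₁ : X₁) (x₂ : X₂), g₁ x₁ = g₂ x₂ → ∃! x : X, f₁ x = x₁ ∧ f₂ x = x₂) →
      fE f₁ ∘ map f₂ = map g₁ ∘ fE g₂ ∧ fA f₁ ∘ map f₂ = map g₁ ∘ fA g₂)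
    (Sig : Type u) (tr : P Sig)
    (dImp : Sig × Sig → Sig)
    (hdImp : map dImp tr
      = map (Prod.fst : Sig × Sig → Sig) tr ⇨ map (Prod.snd : Sig × Sig → Sig) tr)
    (dInf : Set Sig → Sig)
    (hdInf : map dInf tr = fA (fun z : {z : Sig × Set Sig // z.1 ∈ z.2} => z.1.2)
      (map (fun z : {z : Sig × Set Sig // z.1 ∈ z.2} => z.1.1) tr))
    (X : Type u) (a b : X → Aof Sig) :
    map (fun x => Aimp dInf dImp (a x) (b x)) (map (phiA dInf dImp) tr)
      = map a (map (phiA dInf dImp) tr) ⇨ map b (map (phiA dInf dImp) tr) :=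
  ForallHyperdoctrine.map_phiA_Aimp
    ⟨map, map_comp, map_inf, map_himp, fA, adjA, fun f₁ f₂ g₁ g₂ h hu => (BC f₁ f₂ g₁ g₂ h hu).2⟩
    tr hdImp hdInf a b

theorem imp_via_Aimp
    (P : Type u → Type v) [∀ X, HeytingAlgebra (P X)]
    (map : ∀ {X Y : Type u}, (X → Y) → P Y → P X)
    (map_id : ∀ (X : Type u), map (id : X → X) = id)
    (map_comp : ∀ {X Y Z : Type u} (f : X → Y) (g : Y → Z), map (g ∘ f) = map f ∘ map g)
    (map_inf : ∀ {X Y : Type u} (f : X → Y) (p q : P Y), map f (p ⊓ q) = map f p ⊓ map f q)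
    (map_sup : ∀ {X Y : Type u} (f : X → Y) (p q : P Y), map f (p ⊔ q) = map f p ⊔ map f q)
    (map_himp : ∀ {X Y : Type u} (f : X → Y) (p q : P Y), map f (p ⇨ q) = map f p ⇨ map f q)
    (map_top : ∀ {X Y : Type u} (f : X → Y), map f (⊤ : P Y) = ⊤)
    (map_bot : ∀ {X Y : Type u} (f : X → Y), map f (⊥ : P Y) = ⊥)
    (fE fA : ∀ {X Y : Type u}, (X → Y) → P X → P Y)
    (fE_mono : ∀ {X Y : Type u} (f : X → Y), Monotone (fE f))
    (fA_mono : ∀ {X Y : Type u} (f : X → Y), Monotone (fA f))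
    (adjE : ∀ {X Y : Type u} (f : X → Y) (p : P X) (q : P Y), fE f p ≤ q ↔ p ≤ map f q)
    (adjA : ∀ {X Y : Type u} (f : X → Y) (p : P X) (q : P Y), q ≤ fA f p ↔ map f q ≤ p)
    (BC : ∀ {X X₁ X₂ Y : Type u} (f₁ : X → X₁) (f₂ : X → X₂) (g₁ : X₁ → Y) (g₂ : X₂ → Y),
      g₁ ∘ f₁ = g₂ ∘ f₂ →
      (∀ (x₁ : X₁) (x₂ : X₂), g₁ x₁ = g₂ x₂ → ∃! x : X, f₁ x = x₁ ∧ f₂ x = x₂) →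
      fE f₁ ∘ map f₂ = map g₁ ∘ fE g₂ ∧ fA f₁ ∘ map f₂ = map g₁ ∘ fA g₂)
    (Sig : Type u) (tr : P Sig)
    (htr : ∀ X : Type u, Function.Surjective (fun σ : X → Sig => map σ tr))
    (dImp : Sig × Sig → Sig)
    (hdImp : map dImp tr
      = map (Prod.fst : Sig × Sig → Sig) tr ⇨ map (Prod.snd : Sig × Sig → Sig) tr)
    (dInf : Set Sig → Sig)
    (hdInf : map dInf tr = fA (fun z : {z : Sig × Set Sig // z.1 ∈ z.2} => z.1.2)
      (map (fun z : {z : Sig × Set Sig // z.1 ∈ z.2} => z.1.1) tr))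
    (X : Type u) (a b : X → Aof Sig) :
    map (fun x => Aimp dInf dImp (a x) (b x)) (map (phiA dInf dImp) tr)
      = map a (map (phiA dInf dImp) tr) ⇨ map b (map (phiA dInf dImp) tr) :=
  imp_via_Aimp_general P map map_comp map_inf map_himp fE fA adjA BC Sig tr dImp hdImp dInf hdInf X
    a b
end

section
/- For every Set-based tripos P there exists an implicative algebra (A, ≼, →, S) such that P is isomorphic to the implicative tripos induced by (A, ≼, →, S); that is, there is a family of Heyting algebra isomorphisms φ_X : A^X/S[X] → P X, indexed by sets X, which is natural: for every function f : X → Y, P f ∘ φ_Y equals φ_X composed with the substitution map of the implicative tripos induced by precomposition with f. -/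
/-!
Fix a generic predicate `tr : P Sig`. The implicative algebra is the power set of `Sig` ordered
by reverse inclusion, a family `a : X → Set Sig` standing for the predicate
`x ↦ ∀ σ ∈ a x, tr σ` (`boundedAll`). Every predicate `σ* tr` arises from the singletons
`x ↦ {σ x}`, and Beck–Chevalley makes this interpretation natural. Genericity also provides a
code `j : Set Sig × Sig → Sig` for `(∀ σ ∈ c, tr σ) ⇨ tr τ`; the implication `a → b` is the set
of codes `j (c, τ)` with `τ ∈ b` and `c ⊇ a`, and its interpretation is the Heyting implication
of those of `a` and `b` (Frobenius reciprocity for `∀`). The separator consists of the sets whose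
interpretation is `⊤`; meets are unions, and `∀` over `X` of a union is `∀` over `X` of the
family, so `⨅ x, (a x → b x)` lies in it exactly when the interpretation of `a` entails that of
`b`, while `K`, `S` and modus ponens become Heyting tautologies.
-/

universe u v

/-- An implicative algebra: a complete lattice equipped with an implication
satisfying the variance and distributivity laws, together with a separator. -/
structure ImpAlg : Type (u + 1) where
  carrier : Type u
  [lat : CompleteLattice carrier]
  imp : carrier → carrier → carrier
  imp_mono : ∀ {a a' b b' : carrier}, a' ≤ a → b ≤ b' → imp a b ≤ imp a' b'
  imp_sInf : ∀ (a : carrier) (B : Set carrier), imp a (sInf B) = ⨅ b ∈ B, imp a b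
  S : Set carrier
  S_up : ∀ {a a' : carrier}, a ∈ S → a ≤ a' → a' ∈ S
  S_K : (⨅ a : carrier, ⨅ b : carrier, imp a (imp b a)) ∈ S
  S_S : (⨅ a : carrier, ⨅ b : carrier, ⨅ c : carrier,
          imp (imp a (imp b c)) (imp (imp a b) (imp a c))) ∈ S
  S_mp : ∀ {a b : carrier}, imp a b ∈ S → a ∈ S → b ∈ S

attribute [instance] ImpAlg.lat

structure ForallDoctrine (P : Type u → Type v) [∀ X, HeytingAlgebra (P X)] where
  map : ∀ {X Y : Type u}, (X → Y) → P Y → P X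
  map_id : ∀ X : Type u, map (id : X → X) = id
  map_comp : ∀ {X Y Z : Type u} (f : X → Y) (g : Y → Z), map (g ∘ f) = map f ∘ map g
  map_himp : ∀ {X Y : Type u} (f : X → Y) (p q : P Y), map f (p ⇨ q) = map f p ⇨ map f q
  map_top : ∀ {X Y : Type u} (f : X → Y), map f (⊤ : P Y) = ⊤
  all : ∀ {X Y : Type u}, (X → Y) → P X → P Y
  gc : ∀ {X Y : Type u} (f : X → Y), GaloisConnection (map f) (all f)
  all_map_of_isPullback : ∀ {X X₁ X₂ Y : Type u} (f₁ : X → X₁) (f₂ : X → X₂) (g₁ : X₁ → Y)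
    (g₂ : X₂ → Y), g₁ ∘ f₁ = g₂ ∘ f₂ →
    (∀ (x₁ : X₁) (x₂ : X₂), g₁ x₁ = g₂ x₂ → ∃! x : X, f₁ x = x₁ ∧ f₂ x = x₂) →
    all f₁ ∘ map f₂ = map g₁ ∘ all g₂

namespace ForallDoctrine

open OrderDual

variable {P : Type u → Type v} [∀ X, HeytingAlgebra (P X)] (T : ForallDoctrine P)
variable {X Y Z : Type u}

theorem map_map (f : X → Y) (g : Y → Z) (r : P Z) : T.map f (T.map g r) = T.map (g ∘ f) r :=
  (congrFun (T.map_comp f g) r).symm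

theorem map_id_apply (r : P X) : T.map id r = r :=
  congrFun (T.map_id X) r

theorem map_mono (f : X → Y) : Monotone (T.map f) :=
  (T.gc f).monotone_l

theorem all_comp (f : X → Y) (g : Y → Z) (r : P X) : T.all (g ∘ f) r = T.all g (T.all f r) :=
  (T.gc (g ∘ f)).u_unique ((T.gc g).compose (T.gc f)) fun p => by rw [T.map_comp]

theorem all_eq_of_section {π : X → Y} (s : Y → X) (hs : π ∘ s = id) {F : P X} {G : P Y}
    (hπ : T.map π G ≤ F) (hsF : T.map s F ≤ G) : T.all π F = G := by
  refine le_antisymm ?_ ((T.gc π).le_u hπ)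
  calc T.all π F = T.map s (T.map π (T.all π F)) := by rw [map_map, hs, map_id_apply]
    _ ≤ T.map s F := T.map_mono s ((T.gc π).l_u_le F)
    _ ≤ G := hsF

theorem all_map_of_surjective {s : X → Y} (hs : Function.Surjective s) (r : P Y) :
    T.all s (T.map s r) = r :=
  T.all_eq_of_section (Function.surjInv hs) (Function.comp_surjInv hs) le_rfl
    (by rw [map_map, Function.comp_surjInv, map_id_apply])

theorem all_himp_map (f : X → Y) (p : P Y) (q : P X) :
    T.all f (T.map f p ⇨ q) = p ⇨ T.all f q := by
  apply le_antisymm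
  · rw [le_himp_iff, ← (T.gc f).le_iff_le]
    calc T.map f (T.all f (T.map f p ⇨ q) ⊓ p)
        ≤ T.map f (T.all f (T.map f p ⇨ q)) ⊓ T.map f p := (T.map_mono f).map_inf_le _ _
      _ ≤ (T.map f p ⇨ q) ⊓ T.map f p := inf_le_inf_right _ ((T.gc f).l_u_le _)
      _ ≤ q := himp_inf_le
  · rw [← (T.gc f).le_iff_le, T.map_himp]
    exact himp_le_himp_left ((T.gc f).l_u_le q)

theorem top_le_all_iff (f : X → Y) (r : P X) : ⊤ ≤ T.all f r ↔ ⊤ ≤ r := by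
  rw [← (T.gc f).le_iff_le, T.map_top]

variable {Sig : Type u} (tr : P Sig)

def boundedAll (d : Y → Set Sig) : P Y :=
  T.all (fun z : {p : Y × Sig // p.2 ∈ d p.1} => z.1.1) (T.map (fun z => z.1.2) tr)

theorem all_map_eq_boundedAll (d : Y → Set Sig) (π : X → Y) (κ : X → Sig)
    (hmem : ∀ x, κ x ∈ d (π x)) (hcover : ∀ y, ∀ σ ∈ d y, ∃ x, π x = y ∧ κ x = σ) :
    T.all π (T.map κ tr) = T.boundedAll tr d := by
  let s : X → {p : Y × Sig // p.2 ∈ d p.1} := fun x => ⟨(π x, κ x), hmem x⟩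
  have hs : Function.Surjective s := by
    rintro ⟨⟨y, σ⟩, h⟩
    obtain ⟨x, rfl, rfl⟩ := hcover y σ h
    exact ⟨x, rfl⟩
  rw [boundedAll, ← T.all_map_of_surjective hs (T.map _ tr), ← T.all_comp, T.map_map]
  rfl

theorem map_boundedAll (f : X → Y) (d : Y → Set Sig) :
    T.map f (T.boundedAll tr d) = T.boundedAll tr (d ∘ f) := by
  have hpb := T.all_map_of_isPullback (fun z : {p : X × Sig // p.2 ∈ d (f p.1)} => z.1.1)
    (fun z => (⟨(f z.1.1, z.1.2), z.2⟩ : {p : Y × Sig // p.2 ∈ d p.1})) f (fun z => z.1.1) rfl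
    (by
      rintro x ⟨⟨_, σ⟩, hσ⟩ rfl
      refine ⟨⟨(x, σ), hσ⟩, ⟨rfl, rfl⟩, ?_⟩
      rintro ⟨⟨_, _⟩, _⟩ ⟨rfl, h⟩
      exact Subtype.ext (Prod.ext rfl (congrArg (fun z => z.1.2) h)))
  have h := congrFun hpb (T.map (fun z : {p : Y × Sig // p.2 ∈ d p.1} => z.1.2) tr)
  rw [Function.comp_apply, Function.comp_apply, map_map] at h
  exact h.symm

theorem boundedAll_anti {c d : Y → Set Sig} (h : ∀ y, c y ⊆ d y) :
    T.boundedAll tr d ≤ T.boundedAll tr c := by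
  let ι : {p : Y × Sig // p.2 ∈ c p.1} → {p : Y × Sig // p.2 ∈ d p.1} := fun z => ⟨z.1, h _ z.2⟩
  refine (T.gc _).le_u ?_
  calc T.map (fun z => z.1.1) (T.boundedAll tr d)
      = T.map ι (T.map (fun z => z.1.1) (T.boundedAll tr d)) := by rw [map_map]; rfl
    _ ≤ T.map ι (T.map (fun z => z.1.2) tr) := T.map_mono ι ((T.gc _).l_u_le _)
    _ = T.map (fun z => z.1.2) tr := by rw [map_map]; rfl

theorem boundedAll_singleton : T.boundedAll tr (fun σ : Sig => {σ}) = tr := by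
  rw [← T.all_map_eq_boundedAll tr (fun σ : Sig => {σ}) id id (fun _ => rfl)
    fun y σ h => ⟨y, rfl, (Set.mem_singleton_iff.1 h).symm⟩]
  exact T.all_map_of_surjective Function.surjective_id tr

theorem surjective_boundedAll (hgen : Function.Surjective fun σ : X → Sig => T.map σ tr) :
    Function.Surjective (T.boundedAll tr (Y := X)) := by
  intro p
  obtain ⟨σ, rfl⟩ := hgen p
  exact ⟨_, (T.map_boundedAll tr σ _).symm.trans (congrArg _ (T.boundedAll_singleton tr))⟩

theorem boundedAll_iUnion (c : X → Set Sig) :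
    T.boundedAll tr (fun _ : PUnit.{u + 1} => ⋃ x, c x) =
      T.all (fun _ => PUnit.unit) (T.boundedAll tr c) := by
  let G := {p : X × Sig // p.2 ∈ c p.1}
  have hcover : ∀ y : PUnit.{u + 1}, ∀ σ ∈ ⋃ x, c x, ∃ z : G, PUnit.unit = y ∧ z.1.2 = σ := by
    rintro ⟨⟩ σ hσ
    obtain ⟨x, hx⟩ := Set.mem_iUnion.1 hσ
    exact ⟨⟨(x, σ), hx⟩, rfl, rfl⟩
  rw [← T.all_map_eq_boundedAll tr (fun _ => ⋃ x, c x) (fun _ : G => PUnit.unit)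
    (fun z : G => z.1.2) (fun z => Set.mem_iUnion.2 ⟨z.1.1, z.2⟩) hcover, T.all_comp]
  rfl

theorem all_superset_boundedAll_himp (a : X → Set Sig) (q : P X) :
    T.all (fun z : {z : X × Set Sig // a z.1 ⊆ z.2} => z.1.1)
      (T.boundedAll tr (fun z => z.1.2) ⇨ T.map (fun z => z.1.1) q) = T.boundedAll tr a ⇨ q := by
  apply T.all_eq_of_section (fun x => ⟨(x, a x), subset_rfl⟩) rfl
  · rw [T.map_himp, T.map_boundedAll]
    exact himp_le_himp_right (T.boundedAll_anti tr Subtype.property)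
  · rw [T.map_himp, T.map_boundedAll, T.map_map]
    exact le_of_eq (congrArg (T.boundedAll tr a ⇨ ·) (T.map_id_apply q))

/-- Upward saturation of the antecedent makes `impSet j` antitone in it. -/
def impSet (j : Set Sig × Sig → Sig) (a b : Set Sig) : Set Sig :=
  {σ | ∃ τ ∈ b, ∃ c ⊇ a, j (c, τ) = σ}

theorem boundedAll_impSet {j : Set Sig × Sig → Sig}
    (hj : T.map j tr = T.boundedAll tr Prod.fst ⇨ T.map Prod.snd tr) (a b : X → Set Sig) :
    T.boundedAll tr (fun x => impSet j (a x) (b x)) = T.boundedAll tr a ⇨ T.boundedAll tr b := by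
  let W := {p : X × Sig // p.2 ∈ b p.1}
  -- `V` indexes the codes `j (c, τ)` making up `impSet j (a x) (b x)`: `τ ∈ b x` and `c ⊇ a x`.
  let V := {z : W × Set Sig // a z.1.1.1 ⊆ z.2}
  have hpres : T.all (fun z : V => z.1.1.1.1) (T.map (fun z => j (z.1.2, z.1.1.1.2)) tr) =
      T.boundedAll tr (fun x => impSet j (a x) (b x)) :=
    T.all_map_eq_boundedAll tr _ _ _ (fun z => ⟨_, z.1.1.2, _, z.2, rfl⟩)
      (by rintro x σ ⟨τ, hτ, c, hc, rfl⟩; exact ⟨⟨(⟨(x, τ), hτ⟩, c), hc⟩, rfl, rfl⟩)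
  have hj' : T.map (fun z : V => j (z.1.2, z.1.1.1.2)) tr = T.boundedAll tr (fun z : V => z.1.2) ⇨
      T.map (fun z : V => z.1.1) (T.map (fun w : W => w.1.2) tr) := by
    have h := congrArg (T.map fun z : V => (z.1.2, z.1.1.1.2)) hj
    rw [T.map_map, T.map_himp, T.map_boundedAll, T.map_map] at h
    rw [T.map_map]
    exact h
  calc T.boundedAll tr (fun x => impSet j (a x) (b x))
      = T.all (fun w : W => w.1.1) (T.all (fun z : V => z.1.1)
          (T.boundedAll tr (fun z : V => z.1.2) ⇨
            T.map (fun z : V => z.1.1) (T.map (fun w : W => w.1.2) tr))) := by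
        rw [← hpres, hj', ← T.all_comp]; rfl
    _ = T.all (fun w : W => w.1.1) (T.map (fun w : W => w.1.1) (T.boundedAll tr a) ⇨
          T.map (fun w : W => w.1.2) tr) := by
        rw [T.all_superset_boundedAll_himp tr fun w : W => a w.1.1, T.map_boundedAll]; rfl
    _ = T.boundedAll tr a ⇨ T.boundedAll tr b := T.all_himp_map _ _ _

theorem top_le_boundedAll_iInf (F : X → (Set Sig)ᵒᵈ) :
    ⊤ ≤ T.boundedAll tr (fun _ : PUnit.{u + 1} => ofDual (⨅ x, F x)) ↔
      ⊤ ≤ T.boundedAll tr (fun x => ofDual (F x)) := by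
  change ⊤ ≤ T.boundedAll tr (fun _ : PUnit.{u + 1} => ⋃ x, ofDual (F x)) ↔ _
  rw [boundedAll_iUnion, top_le_all_iff]

def impAlg {j : Set Sig × Sig → Sig}
    (hj : T.map j tr = T.boundedAll tr Prod.fst ⇨ T.map Prod.snd tr) : ImpAlg.{u} where
  carrier := (Set Sig)ᵒᵈ
  imp a b := toDual (impSet j (ofDual a) (ofDual b))
  imp_mono ha hb := by
    rintro σ ⟨τ, hτ, c, hc, rfl⟩
    exact ⟨τ, hb hτ, c, fun x hx => hc (ha hx), rfl⟩
  imp_sInf a B := by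
    ext σ
    simp only [impSet, ofDual_sInf, Set.sSup_eq_sUnion, Set.mem_sUnion, Set.mem_preimage,
      ge_iff_le, ofDual_toDual, Set.mem_ofPred_eq, ofDual_iInf, Set.iSup_eq_iUnion, Set.mem_iUnion,
      exists_prop, OrderDual.exists]
    aesop
  S := {a | ⊤ ≤ T.boundedAll tr fun _ : PUnit.{u + 1} => ofDual a}
  S_up ha h := ha.trans (T.boundedAll_anti tr fun _ => h)
  S_K := by
    rw [iInf_prod']
    refine (T.top_le_boundedAll_iInf tr _).2 ?_
    simp only [ofDual_toDual, T.boundedAll_impSet tr hj]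
    simp
  S_S := by
    rw [iInf_prod', iInf_prod']
    refine (T.top_le_boundedAll_iInf tr _).2 ?_
    simp only [ofDual_toDual, T.boundedAll_impSet tr hj]
    simp [himp_himp, inf_comm]
  S_mp hab ha := (le_inf (hab.trans (T.boundedAll_impSet tr hj _ _).le) ha).trans himp_inf_le

theorem impAlg_le_iff_iInf_imp_mem {j : Set Sig × Sig → Sig}
    (hj : T.map j tr = T.boundedAll tr Prod.fst ⇨ T.map Prod.snd tr)
    (a b : X → (T.impAlg tr hj).carrier) :
    T.boundedAll tr (fun x => ofDual (a x)) ≤ T.boundedAll tr (fun x => ofDual (b x)) ↔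
      (⨅ x, (T.impAlg tr hj).imp (a x) (b x)) ∈ (T.impAlg tr hj).S := by
  refine Iff.trans ?_ (T.top_le_boundedAll_iInf tr _).symm
  change _ ↔ ⊤ ≤ T.boundedAll tr fun x => impSet j (ofDual (a x)) (ofDual (b x))
  rw [T.boundedAll_impSet tr hj, top_le_iff, himp_eq_top_iff]

end ForallDoctrine

theorem setBased_tripos_is_implicative_general
    (P : Type u → Type v) [∀ X, HeytingAlgebra (P X)]
    (map : ∀ {X Y : Type u}, (X → Y) → P Y → P X)
    (map_id : ∀ (X : Type u), map (id : X → X) = id)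
    (map_comp : ∀ {X Y Z : Type u} (f : X → Y) (g : Y → Z), map (g ∘ f) = map f ∘ map g)
    (map_himp : ∀ {X Y : Type u} (f : X → Y) (p q : P Y), map f (p ⇨ q) = map f p ⇨ map f q)
    (map_top : ∀ {X Y : Type u} (f : X → Y), map f (⊤ : P Y) = ⊤)
    (fE fA : ∀ {X Y : Type u}, (X → Y) → P X → P Y)
    (adjA : ∀ {X Y : Type u} (f : X → Y) (p : P X) (q : P Y), q ≤ fA f p ↔ map f q ≤ p)
    (BC : ∀ {X X₁ X₂ Y : Type u} (f₁ : X → X₁) (f₂ : X → X₂) (g₁ : X₁ → Y) (g₂ : X₂ → Y),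
      g₁ ∘ f₁ = g₂ ∘ f₂ →
      (∀ (x₁ : X₁) (x₂ : X₂), g₁ x₁ = g₂ x₂ → ∃! x : X, f₁ x = x₁ ∧ f₂ x = x₂) →
      fE f₁ ∘ map f₂ = map g₁ ∘ fE g₂ ∧ fA f₁ ∘ map f₂ = map g₁ ∘ fA g₂)
    (hgen : ∃ (Sig : Type u) (tr : P Sig),
      ∀ X : Type u, Function.Surjective (fun σ : X → Sig => map σ tr)) :
    ∃ (M : ImpAlg.{u}) (ρ : ∀ X : Type u, (X → M.carrier) → P X),
      (∀ X : Type u, Function.Surjective (ρ X)) ∧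
      (∀ (X : Type u) (a b : X → M.carrier),
        ρ X a ≤ ρ X b ↔ (⨅ x : X, M.imp (a x) (b x)) ∈ M.S) ∧
      (∀ (X Y : Type u) (f : X → Y) (b : Y → M.carrier),
        ρ X (b ∘ f) = map f (ρ Y b)) := by
  let T : ForallDoctrine P :=
    { map := map, map_id := map_id, map_comp := map_comp, map_himp := map_himp, map_top := map_top,
      all := fA, gc := fun f q p => (adjA f p q).symm,
      all_map_of_isPullback := fun f₁ f₂ g₁ g₂ h hpb => (BC f₁ f₂ g₁ g₂ h hpb).2 }
  obtain ⟨Sig, tr, hgen⟩ := hgen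
  obtain ⟨j, hj⟩ := hgen (Set Sig × Sig) (T.boundedAll tr Prod.fst ⇨ T.map Prod.snd tr)
  exact ⟨T.impAlg tr hj, fun X a => T.boundedAll tr fun x => OrderDual.ofDual (a x),
    fun X => T.surjective_boundedAll tr (hgen X), fun X => T.impAlg_le_iff_iInf_imp_mem tr hj,
    fun X Y f b => (T.map_boundedAll tr f _).symm⟩

/-- Every `Set`-based tripos is (isomorphic to) an implicative tripos: there is an
implicative algebra `M` and a natural family of surjections
`ρ X : M.carrier ^ X → P X` that both preserve and reflect the entailment preorder
`a ⊢_{S[X]} b ⟺ ⨅_{x ∈ X} (a x → b x) ∈ S` of the implicative tripos; such a family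
induces, through the poset reflections `M^X/S[X]`, a natural family of Heyting algebra
isomorphisms `M^X/S[X] ≅ P X`. -/
theorem setBased_tripos_is_implicative
    (P : Type u → Type v) [∀ X, HeytingAlgebra (P X)]
    (map : ∀ {X Y : Type u}, (X → Y) → P Y → P X)
    (map_id : ∀ (X : Type u), map (id : X → X) = id)
    (map_comp : ∀ {X Y Z : Type u} (f : X → Y) (g : Y → Z), map (g ∘ f) = map f ∘ map g)
    (map_inf : ∀ {X Y : Type u} (f : X → Y) (p q : P Y), map f (p ⊓ q) = map f p ⊓ map f q)
    (map_sup : ∀ {X Y : Type u} (f : X → Y) (p q : P Y), map f (p ⊔ q) = map f p ⊔ map f q)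
    (map_himp : ∀ {X Y : Type u} (f : X → Y) (p q : P Y), map f (p ⇨ q) = map f p ⇨ map f q)
    (map_top : ∀ {X Y : Type u} (f : X → Y), map f (⊤ : P Y) = ⊤)
    (map_bot : ∀ {X Y : Type u} (f : X → Y), map f (⊥ : P Y) = ⊥)
    (fE fA : ∀ {X Y : Type u}, (X → Y) → P X → P Y)
    (fE_mono : ∀ {X Y : Type u} (f : X → Y), Monotone (fE f))
    (fA_mono : ∀ {X Y : Type u} (f : X → Y), Monotone (fA f))
    (adjE : ∀ {X Y : Type u} (f : X → Y) (p : P X) (q : P Y), fE f p ≤ q ↔ p ≤ map f q)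
    (adjA : ∀ {X Y : Type u} (f : X → Y) (p : P X) (q : P Y), q ≤ fA f p ↔ map f q ≤ p)
    (BC : ∀ {X X₁ X₂ Y : Type u} (f₁ : X → X₁) (f₂ : X → X₂) (g₁ : X₁ → Y) (g₂ : X₂ → Y),
      g₁ ∘ f₁ = g₂ ∘ f₂ →
      (∀ (x₁ : X₁) (x₂ : X₂), g₁ x₁ = g₂ x₂ → ∃! x : X, f₁ x = x₁ ∧ f₂ x = x₂) →
      fE f₁ ∘ map f₂ = map g₁ ∘ fE g₂ ∧ fA f₁ ∘ map f₂ = map g₁ ∘ fA g₂)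
    (hgen : ∃ (Sig : Type u) (tr : P Sig),
      ∀ X : Type u, Function.Surjective (fun σ : X → Sig => map σ tr)) :
    ∃ (M : ImpAlg.{u}) (ρ : ∀ X : Type u, (X → M.carrier) → P X),
      (∀ X : Type u, Function.Surjective (ρ X)) ∧
      (∀ (X : Type u) (a b : X → M.carrier),
        ρ X a ≤ ρ X b ↔ (⨅ x : X, M.imp (a x) (b x)) ∈ M.S) ∧
      (∀ (X Y : Type u) (f : X → Y) (b : Y → M.carrier),
        ρ X (b ∘ f) = map f (ρ Y b)) :=
  setBased_tripos_is_implicative_general P map map_id map_comp map_himp map_top fE fA adjA BC hgen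
end
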